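/- arXiv:1403.0542 — 11 statements merged into one kernel-verified Lean document; each statement's English description precedes it below -/
import Mathlib

section
/- Let q ≥ 2 be an integer and let (τ_n)_{n≥0} be a strongly q-multiplicative sequence of complex numbers with |τ_n| ≤ 1 for all n. Let ψ(N) = Σ_{n<N} τ_n. If |ψ(q)| = |τ_0 + τ_1 + … + τ_{q−1}| ≤ 1, then ψ(N) = O(log N), i.e. there is a constant C such that |ψ(N)| ≤ C·log N for all N ≥ 2. -/
/-!
Splitting `[0, N)` into the `⌊N/q⌋` complete blocks of length `q` and a partial block, strong
`q`-multiplicativity gives `ψ(N) = ψ(⌊N/q⌋) ψ(q) + τ(⌊N/q⌋) ψ(N mod q)`. With `|ψ(q)| ≤ 1` and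
`|τ| ≤ 1` this yields `|ψ(N)| ≤ |ψ(⌊N/q⌋)| + q`, and iterating over the `log_q N + 1` base-`q`
digits of `N` bounds `|ψ(N)|` by `q (log_q N + 1)`.
-/

open Finset

theorem le_mul_natLog_add_one_of_le_div_add {b : ℕ} (hb : 1 < b) {f : ℕ → ℝ} {a : ℝ}
    (h0 : f 0 ≤ 0) (hstep : ∀ N, f N ≤ f (N / b) + a) (N : ℕ) :
    f N ≤ a * (Nat.log b N + 1) := by
  induction N using Nat.strong_induction_on with
  | _ N ih =>
    rcases lt_or_ge N b with hNb | hbN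
    · have := hstep N
      rw [Nat.div_eq_of_lt hNb] at this
      rw [Nat.log_of_lt hNb]
      push_cast
      linarith
    · have hdiv : N / b < N := Nat.div_lt_self (by omega) hb
      rw [Nat.log_of_one_lt_of_le hb hbN]
      push_cast
      linarith [hstep N, ih _ hdiv]

theorem norm_sum_range_le_card {τ : ℕ → ℂ} (hbound : ∀ n, ‖τ n‖ ≤ 1) (N : ℕ) :
    ‖∑ n ∈ range N, τ n‖ ≤ N := by
  simpa using norm_sum_le_of_le (range N) fun n _ => hbound n

section BlockDecomposition

variable {q : ℕ} {τ : ℕ → ℂ}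

theorem sum_range_mul_add (hmul : ∀ n c, c < q → τ (q * n + c) = τ n * τ c)
    (m : ℕ) {c : ℕ} (hc : c ≤ q) :
    ∑ n ∈ range (q * m + c), τ n = ∑ n ∈ range (q * m), τ n + τ m * ∑ n ∈ range c, τ n := by
  rw [sum_range_add, mul_sum]
  exact congrArg _ (sum_congr rfl fun j hj => hmul m j ((mem_range.mp hj).trans_le hc))

theorem sum_range_mul (hmul : ∀ n c, c < q → τ (q * n + c) = τ n * τ c) (m : ℕ) :
    ∑ n ∈ range (q * m), τ n = (∑ n ∈ range m, τ n) * ∑ n ∈ range q, τ n := by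
  induction m with
  | zero => simp
  | succ m ih => rw [mul_add_one, sum_range_mul_add hmul m le_rfl, ih, sum_range_succ, add_mul]

theorem sum_range_eq_div_mod (hq : 0 < q) (hmul : ∀ n c, c < q → τ (q * n + c) = τ n * τ c)
    (N : ℕ) :
    ∑ n ∈ range N, τ n = (∑ n ∈ range (N / q), τ n) * (∑ n ∈ range q, τ n)
      + τ (N / q) * ∑ n ∈ range (N % q), τ n := by
  conv_lhs => rw [← Nat.div_add_mod N q]
  rw [sum_range_mul_add hmul _ (Nat.mod_lt N hq).le, sum_range_mul hmul]

theorem norm_sum_range_le_div_add (hq : 0 < q)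
    (hmul : ∀ n c, c < q → τ (q * n + c) = τ n * τ c) (hbound : ∀ n, ‖τ n‖ ≤ 1)
    (hsmall : ‖∑ n ∈ range q, τ n‖ ≤ 1) (N : ℕ) :
    ‖∑ n ∈ range N, τ n‖ ≤ ‖∑ n ∈ range (N / q), τ n‖ + q := by
  have hpartial : ‖∑ n ∈ range (N % q), τ n‖ ≤ q :=
    (norm_sum_range_le_card hbound _).trans (mod_cast (Nat.mod_lt N hq).le)
  rw [sum_range_eq_div_mod hq hmul N]
  refine (norm_add_le _ _).trans (add_le_add ?_ ?_) <;> rw [norm_mul]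
  · exact mul_le_of_le_one_right (norm_nonneg _) hsmall
  · simpa using mul_le_mul (hbound _) hpartial (norm_nonneg _) zero_le_one

theorem norm_sum_range_le_mul_natLog (hq : 1 < q)
    (hmul : ∀ n c, c < q → τ (q * n + c) = τ n * τ c) (hbound : ∀ n, ‖τ n‖ ≤ 1)
    (hsmall : ‖∑ n ∈ range q, τ n‖ ≤ 1) (N : ℕ) :
    ‖∑ n ∈ range N, τ n‖ ≤ q * (Nat.log q N + 1) :=
  le_mul_natLog_add_one_of_le_div_add hq (f := fun N => ‖∑ n ∈ range N, τ n‖) (by simp)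
    (norm_sum_range_le_div_add (by omega) hmul hbound hsmall) N

end BlockDecomposition

theorem natLog_add_one_le_two_mul_logb_two {q N : ℕ} (hq : 2 ≤ q) (hN : 2 ≤ N) :
    (Nat.log q N + 1 : ℝ) ≤ 2 * Real.logb 2 N := by
  have hle : Nat.log q N + 1 ≤ 2 * Nat.log 2 N := by
    have := Nat.log_anti_left (n := N) one_lt_two hq
    have := Nat.log_pos one_lt_two hN
    omega
  calc (Nat.log q N + 1 : ℝ) ≤ 2 * (Nat.log 2 N : ℕ) := mod_cast hle
    _ ≤ 2 * Real.logb 2 N := by gcongr; exact_mod_cast Real.natLog_le_logb N 2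

theorem rarefaction_stmt0_general
    (q : ℕ) (hq : 2 ≤ q) (τ : ℕ → ℂ)
    (hmul : ∀ n : ℕ, ∀ c : ℕ, c < q → τ (q * n + c) = τ n * τ c)
    (hbound : ∀ n : ℕ, ‖τ n‖ ≤ 1)
    (hsmall : ‖∑ n ∈ Finset.range q, τ n‖ ≤ 1) :
    ∃ C : ℝ, ∀ N : ℕ, 2 ≤ N →
      ‖∑ n ∈ Finset.range N, τ n‖ ≤ C * Real.log N := by
  refine ⟨2 * q / Real.log 2, fun N hN => ?_⟩
  calc ‖∑ n ∈ range N, τ n‖ ≤ q * (Nat.log q N + 1) :=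
        norm_sum_range_le_mul_natLog hq hmul hbound hsmall N
    _ ≤ q * (2 * Real.logb 2 N) := by gcongr; exact natLog_add_one_le_two_mul_logb_two hq hN
    _ = 2 * q / Real.log 2 * Real.log N := by rw [Real.logb]; ring

/-- If `τ` is a strongly `q`-multiplicative sequence of complex numbers
of absolute value at most `1`, and `|ψ(q)| ≤ 1` where `ψ(N) = ∑_{n<N} τ n`,
then `ψ(N) = O(log N)`. -/
theorem rarefaction_stmt0
    (q : ℕ) (hq : 2 ≤ q) (τ : ℕ → ℂ)
    (hτ0 : τ 0 = 1)
    (hmul : ∀ n : ℕ, ∀ c : ℕ, c < q → τ (q * n + c) = τ n * τ c)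
    (hbound : ∀ n : ℕ, ‖τ n‖ ≤ 1)
    (hsmall : ‖∑ n ∈ Finset.range q, τ n‖ ≤ 1) :
    ∃ C : ℝ, ∀ N : ℕ, 2 ≤ N →
      ‖∑ n ∈ Finset.range N, τ n‖ ≤ C * Real.log N :=
  rarefaction_stmt0_general q hq τ hmul hbound hsmall
end

section
/- Let q ≥ 2 be an integer and let (τ_n)_{n≥0} be a strongly q-multiplicative sequence of complex numbers with |τ_n| ≤ 1 for all n. Let ψ(N) = Σ_{n<N} τ_n. If |ψ(q)| = |τ_0 + τ_1 + … + τ_{q−1}| > 1, then ψ(N) = O(N^{log|ψ(q)| / log q}), i.e. there is a constant C such that |ψ(N)| ≤ C·N^{log|ψ(q)|/log q} for all N ≥ 1. -/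
open Finset

/-!
Splitting `N = qM + c` with `c < q`, strong `q`-multiplicativity gives
`ψ(qM + c) = ψ(M) ψ(q) + τ_M ψ(c)`, hence `|ψ(qM + c)| ≤ |ψ(q)| |ψ(M)| + q`. Adding the fixed point
`D = q / (|ψ(q)| - 1)` of `x ↦ |ψ(q)| x + q` turns this into `g(qM + c) ≤ |ψ(q)| g(M)` for
`g = |ψ| + D`, and iterating along the base-`q` digits of `N` yields
`g(N) ≤ C |ψ(q)| ^ log_q N = C N ^ (log |ψ(q)| / log q)`.
-/

theorem sum_range_mul_add_eq {R : Type*} [Semiring R] {q : ℕ} {τ : ℕ → R}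
    (hτ0 : τ 0 = 1) (hmul : ∀ n c : ℕ, c < q → τ (q * n + c) = τ n * τ c) (M : ℕ) {c : ℕ}
    (hc : c ≤ q) :
    ∑ n ∈ range (q * M + c), τ n =
      (∑ n ∈ range M, τ n) * ∑ n ∈ range q, τ n + τ M * ∑ j ∈ range c, τ j := by
  induction M generalizing c with
  | zero => simp [hτ0]
  | succ M ih =>
    have hdigit : ∀ j ∈ range c, τ (q * M + q + j) = τ (M + 1) * τ j := fun j hj => by
      rw [← hmul (M + 1) j ((mem_range.mp hj).trans_le hc)]; ring_nf
    rw [show q * (M + 1) + c = q * M + q + c by ring, sum_range_add, ih le_rfl,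
      sum_congr rfl hdigit, ← mul_sum, sum_range_succ, add_mul]

theorem norm_sum_range_le_of_norm_le_one {E : Type*} [SeminormedAddCommGroup E] {τ : ℕ → E}
    (hbound : ∀ n, ‖τ n‖ ≤ 1) (N : ℕ) : ‖∑ n ∈ range N, τ n‖ ≤ N := by
  simpa using norm_sum_le_of_le (range N) fun n _ => hbound n

theorem norm_sum_range_mul_add_le {R : Type*} [NormedRing R] {q : ℕ} {τ : ℕ → R}
    (hτ0 : τ 0 = 1) (hmul : ∀ n c : ℕ, c < q → τ (q * n + c) = τ n * τ c)
    (hbound : ∀ n, ‖τ n‖ ≤ 1) (M : ℕ) {c : ℕ} (hc : c ≤ q) :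
    ‖∑ n ∈ range (q * M + c), τ n‖ ≤
      ‖∑ n ∈ range q, τ n‖ * ‖∑ n ∈ range M, τ n‖ + q := by
  have hc' : ‖∑ j ∈ range c, τ j‖ ≤ q :=
    (norm_sum_range_le_of_norm_le_one hbound c).trans (by exact_mod_cast hc)
  rw [sum_range_mul_add_eq hτ0 hmul M hc]
  calc _ ≤ ‖∑ n ∈ range M, τ n‖ * ‖∑ n ∈ range q, τ n‖ + ‖τ M‖ * ‖∑ j ∈ range c, τ j‖ :=
        (norm_add_le _ _).trans (add_le_add (norm_mul_le _ _) (norm_mul_le _ _))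
    _ ≤ _ := by nlinarith [hbound M, norm_nonneg (∑ j ∈ range c, τ j), norm_nonneg (τ M)]

theorem le_mul_rpow_of_digit_step_le_mul {q : ℕ} (hq : 2 ≤ q) {s C : ℝ} (hs : 1 ≤ s) (hC : 0 ≤ C)
    {g : ℕ → ℝ} (hsmall : ∀ N, 1 ≤ N → N < q → g N ≤ C)
    (hstep : ∀ M c, 1 ≤ M → c < q → g (q * M + c) ≤ s * g M) :
    ∀ N, 1 ≤ N → g N ≤ C * (N : ℝ) ^ (Real.log s / Real.log q) := by
  set α := Real.log s / Real.log q
  have hlogq : 0 < Real.log q := Real.log_pos (by exact_mod_cast hq)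
  have hα : 0 ≤ α := div_nonneg (Real.log_nonneg hs) hlogq.le
  have hqα : (q : ℝ) ^ α = s := by
    rw [Real.rpow_def_of_pos (by positivity), mul_div_cancel₀ _ hlogq.ne',
      Real.exp_log (by linarith)]
  intro N hN
  induction N using Nat.strong_induction_on with
  | _ N ih =>
    by_cases hNq : N < q
    · exact (hsmall N hN hNq).trans
        (le_mul_of_one_le_right hC (Real.one_le_rpow (by exact_mod_cast hN) hα))
    · have hM : 1 ≤ N / q := (Nat.one_le_div_iff (by omega)).mpr (by omega)
      have hqM : (q : ℝ) * (N / q : ℕ) ≤ N := by exact_mod_cast Nat.mul_div_le N q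
      calc g N = g (q * (N / q) + N % q) := by rw [Nat.div_add_mod]
        _ ≤ s * g (N / q) := hstep _ _ hM (Nat.mod_lt N (by omega))
        _ ≤ s * (C * ((N / q : ℕ) : ℝ) ^ α) :=
          mul_le_mul_of_nonneg_left (ih _ (Nat.div_lt_self (by omega) (by omega)) hM)
            (by linarith)
        _ = C * ((q : ℝ) * (N / q : ℕ)) ^ α := by
          rw [Real.mul_rpow (by positivity) (by positivity), hqα]; ring
        _ ≤ C * (N : ℝ) ^ α := by gcongr

/-- If `τ` is a strongly `q`-multiplicative sequence of complex numbers
of absolute value at most `1`, and `|ψ(q)| > 1` where `ψ(N) = ∑_{n<N} τ n`,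
then `ψ(N) = O(N ^ (log |ψ(q)| / log q))`. -/
theorem rarefaction_stmt1
    (q : ℕ) (hq : 2 ≤ q) (τ : ℕ → ℂ)
    (hτ0 : τ 0 = 1)
    (hmul : ∀ n : ℕ, ∀ c : ℕ, c < q → τ (q * n + c) = τ n * τ c)
    (hbound : ∀ n : ℕ, ‖τ n‖ ≤ 1)
    (hbig : 1 < ‖∑ n ∈ Finset.range q, τ n‖) :
    ∃ C : ℝ, ∀ N : ℕ, 1 ≤ N →
      ‖∑ n ∈ Finset.range N, τ n‖ ≤
        C * (N : ℝ) ^ (Real.log ‖∑ n ∈ Finset.range q, τ n‖ / Real.log q) := by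
  set s := ‖∑ n ∈ range q, τ n‖
  set D : ℝ := q / (s - 1)
  have hD : 0 ≤ D := div_nonneg (Nat.cast_nonneg q) (by linarith)
  have hfix : s * D = D + q := by
    linear_combination div_mul_cancel₀ (q : ℝ) (by linarith : s - 1 ≠ 0)
  have hsmall : ∀ N, 1 ≤ N → N < q → ‖∑ n ∈ range N, τ n‖ + D ≤ q + D := fun N _ hN => by
    have : (N : ℝ) ≤ q := by exact_mod_cast hN.le
    linarith [norm_sum_range_le_of_norm_le_one hbound N]
  have hstep : ∀ M c, 1 ≤ M → c < q →
      ‖∑ n ∈ range (q * M + c), τ n‖ + D ≤ s * (‖∑ n ∈ range M, τ n‖ + D) := fun M c _ hc => by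
    linarith [norm_sum_range_mul_add_le hτ0 hmul hbound M hc.le]
  refine ⟨q + D, fun N hN => ?_⟩
  linarith [le_mul_rpow_of_digit_step_le_mul hq hbig.le (by positivity) hsmall hstep N hN]
end

section
/- Let (t_n)_{n≥0} be a strongly b-multiplicative sequence with values in {−1,0,1} and let p be a prime such that b < p and the residue class of b generates the multiplicative group (ℤ/p)^×. Let ξ := Π_{j=1}^{p−1} (Σ_{c=0}^{b−1} t_c ζ_p^{jc}) (a real number, equal to the field norm N_{ℚ(ζ_p)/ℚ}(Σ_{c=0}^{b−1} t_c ζ_p^c)), where ζ_p = exp(2πi/p). Assume |ξ| > max((Σ_{c=0}^{b−1} t_c)^{p−1}, 1). Then Σ_{n<N, p∣n} t_n = O(N^{log(ξ)/((p−1)·log b)}), i.e. there is a constant C such that |Σ_{n<N, p∣n} t_n| ≤ C·N^{log(ξ)/((p−1) log b)} for all N ≥ 1. -/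
/-!
Write `G(ω, N) = ∑_{n<N} t_n ω^n`. Strong `b`-multiplicativity gives
`G(ω, b^m M) = (∏_{i<m} G(ω^{b^i}, b)) · G(ω^{b^m}, M)`. For `ω = ζ^j` and `m = p - 1` we have
`ω^{b^{p-1}} = ω` by Fermat, and since `b` generates `(ℤ/p)ˣ` the orbit `j b^i` runs over all
nonzero residues when `p ∤ j`, so the product is `ξ`; for `p ∣ j` it is `(∑ t_c)^{p-1}`. Both are
at most `|ξ|`, so `|G(ζ^j, N)| ≤ |ξ| · |G(ζ^j, N / b^{p-1})| + b^{p-1}`, which iterates to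
`|G(ζ^j, N)| = O(|ξ|^k)` for `N < b^{(p-1)k}`. Averaging over `j` isolates the terms with `p ∣ n`.
-/

open Finset Real

theorem IsPrimitiveRoot.sum_pow_pow_eq_ite {K : Type*} [Field K] {ζ : K} {p : ℕ}
    (hζ : IsPrimitiveRoot ζ p) (n : ℕ) :
    ∑ j ∈ range p, (ζ ^ j) ^ n = if p ∣ n then (p : K) else 0 := by
  simp_rw [← pow_mul, mul_comm _ n, pow_mul]
  split_ifs with h
  · simp [(hζ.pow_eq_one_iff_dvd n).2 h]
  · rw [geom_sum_eq ((hζ.pow_eq_one_iff_dvd n).not.2 h), ← pow_mul, mul_comm, pow_mul,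
      hζ.pow_eq_one, one_pow, sub_self, zero_div]

namespace Rarefaction

section Orbit

variable {p b j : ℕ}

lemma exists_lt_mul_pow_mod_eq {k : ℕ} (hp : p.Prime)
    (hgen : ∀ x : ZMod p, x ≠ 0 → ∃ n : ℕ, (b : ZMod p) ^ n = x) (hb : ¬ p ∣ b) (hj : ¬ p ∣ j)
    (hk : ¬ p ∣ k) : ∃ i < p - 1, j * b ^ i % p = k % p := by
  have := Fact.mk hp
  have hjz : (j : ZMod p) ≠ 0 := by rwa [Ne, ZMod.natCast_eq_zero_iff]
  have hkz : (k : ZMod p) ≠ 0 := by rwa [Ne, ZMod.natCast_eq_zero_iff]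
  have hbz : (b : ZMod p) ≠ 0 := by rwa [Ne, ZMod.natCast_eq_zero_iff]
  obtain ⟨n, hn⟩ := hgen _ (mul_ne_zero hkz (inv_ne_zero hjz))
  refine ⟨n % (p - 1), Nat.mod_lt _ (by have := hp.two_le; omega), ?_⟩
  rw [← ZMod.natCast_eq_natCast_iff']
  push_cast
  rw [← pow_eq_pow_mod n (ZMod.pow_card_sub_one_eq_one hbz), hn, mul_comm (k : ZMod p),
    ← mul_assoc, mul_inv_cancel₀ hjz, one_mul]

lemma prod_range_mul_pow_eq_prod_Icc {M : Type*} [CommMonoid M] (hp : p.Prime)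
    (hgen : ∀ x : ZMod p, x ≠ 0 → ∃ n : ℕ, (b : ZMod p) ^ n = x) (hb : ¬ p ∣ b) (hj : ¬ p ∣ j)
    {f : ℕ → M} (hf : ∀ n, f (n % p) = f n) :
    ∏ i ∈ range (p - 1), f (j * b ^ i) = ∏ k ∈ Icc 1 (p - 1), f k := by
  have hmaps : ∀ i ∈ range (p - 1), j * b ^ i % p ∈ Icc 1 (p - 1) := by
    intro i _
    have hne : j * b ^ i % p ≠ 0 := fun h => by
      rcases (Nat.Prime.dvd_mul hp).1 (Nat.dvd_of_mod_eq_zero h) with h | h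
      exacts [hj h, hb (hp.dvd_of_dvd_pow h)]
    have := Nat.mod_lt (j * b ^ i) hp.pos
    rw [mem_Icc]
    omega
  have hsurj : ∀ k ∈ Icc 1 (p - 1), ∃ i, ∃ _ : i ∈ range (p - 1), j * b ^ i % p = k := by
    intro k hk
    rw [mem_Icc] at hk
    have hkp : k < p := by omega
    obtain ⟨i, hi, hik⟩ := exists_lt_mul_pow_mod_eq hp hgen hb hj
      fun h => (Nat.le_of_dvd (by omega) h).not_gt hkp
    exact ⟨i, mem_range.2 hi, hik.trans (Nat.mod_eq_of_lt hkp)⟩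
  have hinj := inj_on_of_surj_on_of_card_le (fun i _ => j * b ^ i % p) hmaps hsurj
    (by rw [card_range, Nat.card_Icc]; omega)
  exact prod_bij (fun i _ => j * b ^ i % p) hmaps hinj hsurj fun i _ => (hf _).symm

lemma pow_pow_sub_one_eq_self {M : Type*} [Monoid M] {ζ : M} (hp : p.Prime) (hb : ¬ p ∣ b)
    (hζ : ζ ^ p = 1) : ζ ^ b ^ (p - 1) = ζ := by
  have := Fact.mk hp
  have hfermat : b ^ (p - 1) % p = 1 % p := (ZMod.natCast_eq_natCast_iff' _ _ _).1 <| by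
    push_cast
    exact ZMod.pow_card_sub_one_eq_one (by rwa [Ne, ZMod.natCast_eq_zero_iff])
  rw [pow_eq_pow_mod _ hζ, hfermat, ← pow_eq_pow_mod _ hζ, pow_one]

end Orbit

section CommSemiring

variable {R : Type*} [CommSemiring R]

def twistedSum (a : ℕ → R) (ω : R) (N : ℕ) : R := ∑ n ∈ range N, a n * ω ^ n

lemma twistedSum_one (a : ℕ → R) (N : ℕ) : twistedSum a 1 N = ∑ n ∈ range N, a n := by
  simp [twistedSum]

variable {a : ℕ → R} {b : ℕ}

lemma twistedSum_mul (hmul : ∀ n c, c < b → a (b * n + c) = a n * a c) (ω : R) (M : ℕ) :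
    twistedSum a ω (b * M) = twistedSum a ω b * twistedSum a (ω ^ b) M := by
  induction M with
  | zero => simp [twistedSum]
  | succ M ih =>
    have hblock : ∑ c ∈ range b, a (b * M + c) * ω ^ (b * M + c) =
        twistedSum a ω b * (a M * (ω ^ b) ^ M) := by
      rw [twistedSum, sum_mul]
      refine sum_congr rfl fun c hc => ?_
      rw [hmul M c (mem_range.1 hc), pow_add, ← pow_mul]
      ring
    rw [Nat.mul_succ, twistedSum, sum_range_add, ← twistedSum, ih, hblock, ← mul_add]
    exact congrArg _ (sum_range_succ _ _).symm

lemma twistedSum_pow_mul (hmul : ∀ n c, c < b → a (b * n + c) = a n * a c) (m : ℕ) (ω : R)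
    (M : ℕ) : twistedSum a ω (b ^ m * M) =
      (∏ i ∈ range m, twistedSum a (ω ^ b ^ i) b) * twistedSum a (ω ^ b ^ m) M := by
  induction m generalizing ω with
  | zero => simp
  | succ m ih =>
    rw [pow_succ', mul_assoc, twistedSum_mul hmul, ih, prod_range_succ', pow_zero, pow_one]
    simp only [← pow_mul, ← pow_succ']
    ring

lemma prod_twistedSum_orbit {ζ : R} {p : ℕ} (hp : p.Prime)
    (hgen : ∀ x : ZMod p, x ≠ 0 → ∃ n : ℕ, (b : ZMod p) ^ n = x) (hb : ¬ p ∣ b)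
    (hζ : ζ ^ p = 1) (j : ℕ) :
    ∏ i ∈ range (p - 1), twistedSum a ((ζ ^ j) ^ b ^ i) b =
      if p ∣ j then (∑ c ∈ range b, a c) ^ (p - 1)
      else ∏ k ∈ Icc 1 (p - 1), twistedSum a (ζ ^ k) b := by
  simp_rw [← pow_mul]
  split_ifs with hj
  · obtain ⟨m, rfl⟩ := hj
    simp [mul_assoc, pow_mul, hζ, twistedSum_one]
  · exact prod_range_mul_pow_eq_prod_Icc (f := fun k => twistedSum a (ζ ^ k) b) hp hgen hb hj
      fun n => by rw [← pow_eq_pow_mod n hζ]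

end CommSemiring

lemma sum_twistedSum_pow_eq {K : Type*} [Field K] {ζ : K} {p : ℕ} (hζ : IsPrimitiveRoot ζ p)
    (a : ℕ → K) (N : ℕ) :
    ∑ j ∈ range p, twistedSum a (ζ ^ j) N = p * ∑ n ∈ range N with p ∣ n, a n := by
  simp only [twistedSum]
  rw [sum_comm, sum_filter, mul_sum]
  refine sum_congr rfl fun n _ => ?_
  rw [← mul_sum, hζ.sum_pow_pow_eq_ite]
  split_ifs <;> simp [mul_comm]

section NormedField

variable {K : Type*} [NormedField K] {a : ℕ → K} {ω : K}

lemma norm_twistedSum_add_sub_le (ha : ∀ n, ‖a n‖ ≤ 1) (hω : ‖ω‖ ≤ 1) (M r : ℕ) :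
    ‖twistedSum a ω (M + r) - twistedSum a ω M‖ ≤ r := by
  rw [twistedSum, twistedSum, sum_range_add, add_sub_cancel_left]
  calc ‖∑ c ∈ range r, a (M + c) * ω ^ (M + c)‖ ≤ ∑ _c ∈ range r, (1 : ℝ) :=
        norm_sum_le_of_le _ fun c _ => by
          rw [norm_mul, norm_pow]
          exact mul_le_one₀ (ha _) (by positivity) (pow_le_one₀ (norm_nonneg _) hω)
    _ = r := by simp

lemma norm_twistedSum_le_of_pow_pow_eq_self {b m : ℕ} (hb : 0 < b)
    (hmul : ∀ n c, c < b → a (b * n + c) = a n * a c) (ha : ∀ n, ‖a n‖ ≤ 1) (hω : ‖ω‖ ≤ 1)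
    (hfix : ω ^ b ^ m = ω) (N : ℕ) :
    ‖twistedSum a ω N‖ ≤
      ‖∏ i ∈ range m, twistedSum a (ω ^ b ^ i) b‖ * ‖twistedSum a ω (N / b ^ m)‖ + b ^ m := by
  have htail := norm_twistedSum_add_sub_le ha hω (b ^ m * (N / b ^ m)) (N % b ^ m)
  have hmod : ((N % b ^ m : ℕ) : ℝ) ≤ b ^ m := by
    exact_mod_cast (Nat.mod_lt _ (by positivity)).le
  rw [Nat.div_add_mod, twistedSum_pow_mul hmul, hfix] at htail
  calc ‖twistedSum a ω N‖
      ≤ ‖(∏ i ∈ range m, twistedSum a (ω ^ b ^ i) b) * twistedSum a ω (N / b ^ m)‖ +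
          ‖twistedSum a ω N -
            (∏ i ∈ range m, twistedSum a (ω ^ b ^ i) b) * twistedSum a ω (N / b ^ m)‖ :=
        norm_le_insert' _ _
    _ ≤ _ := by
      rw [norm_mul]
      linarith

end NormedField

lemma le_of_forall_le_mul_div_add {f : ℕ → ℝ} {A D : ℝ} {B : ℕ} (hA : 1 < A) (hf0 : f 0 ≤ 0)
    (hrec : ∀ N, f N ≤ A * f (N / B) + D) {k N : ℕ} (hN : N < B ^ k) :
    f N ≤ D / (A - 1) * (A ^ k - 1) := by
  induction k generalizing N with
  | zero =>
    obtain rfl : N = 0 := by simpa using hN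
    simpa using hf0
  | succ k ih =>
    have hB : 0 < B := Nat.pos_of_ne_zero fun h => by simp [h] at hN
    have hD : D / (A - 1) * (A - 1) = D := div_mul_cancel₀ _ (by linarith)
    have hdiv : N / B < B ^ k := (Nat.div_lt_iff_lt_mul hB).2 (by rwa [← pow_succ])
    calc f N ≤ A * (D / (A - 1) * (A ^ k - 1)) + D := (hrec N).trans <|
          add_le_add_left (mul_le_mul_of_nonneg_left (ih hdiv) (by linarith : 0 ≤ A)) D
      _ = D / (A - 1) * (A ^ (k + 1) - 1) := by
          rw [pow_succ]
          linear_combination -hD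

lemma norm_sum_filter_dvd_le {a : ℕ → ℂ} {ζ : ℂ} {p N : ℕ} (hζ : IsPrimitiveRoot ζ p)
    (hp : 0 < p) {C : ℝ} (h : ∀ j, ‖twistedSum a (ζ ^ j) N‖ ≤ C) :
    ‖∑ n ∈ range N with p ∣ n, a n‖ ≤ C := by
  have hpC : (p : ℝ) * ‖∑ n ∈ range N with p ∣ n, a n‖ ≤ p * C := by
    calc (p : ℝ) * ‖∑ n ∈ range N with p ∣ n, a n‖
        = ‖∑ j ∈ range p, twistedSum a (ζ ^ j) N‖ := by
          rw [sum_twistedSum_pow_eq hζ, norm_mul, Complex.norm_natCast]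
      _ ≤ ∑ j ∈ range p, C := norm_sum_le_of_le _ fun j _ => h j
      _ = p * C := by simp
  exact le_of_mul_le_mul_left hpC (by exact_mod_cast hp)

lemma pow_log_div_le_rpow {A : ℝ} (hA : 1 ≤ A) {b q N : ℕ} (hb : 1 < b) (hq : 0 < q)
    (hN : N ≠ 0) : A ^ (Nat.log b N / q) ≤ (N : ℝ) ^ (log A / (q * log b)) := by
  set m := Nat.log b N / q
  have hlogb : 0 < log b := log_pos (by exact_mod_cast hb)
  have hbm : ((b ^ (q * m) : ℕ) : ℝ) ≤ N := by
    exact_mod_cast (Nat.pow_le_pow_right (by omega) (Nat.mul_div_le _ q)).trans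
      (Nat.pow_log_le_self b hN)
  calc A ^ m = ((b ^ (q * m) : ℕ) : ℝ) ^ (log A / (q * log b)) := by
        rw [← rpow_natCast, rpow_def_of_pos (by positivity), rpow_def_of_pos (by positivity),
          Nat.cast_pow, Real.log_pow]
        congr 1
        push_cast
        field_simp
    _ ≤ (N : ℝ) ^ (log A / (q * log b)) :=
        rpow_le_rpow (by positivity) hbm (div_nonneg (log_nonneg hA) (by positivity))

theorem norm_sum_filter_dvd_le_rpow {a : ℕ → ℂ} {b p q : ℕ} {ζ : ℂ} {A : ℝ} (hb : 1 < b)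
    (hq : 0 < q) (hmul : ∀ n c, c < b → a (b * n + c) = a n * a c) (ha : ∀ n, ‖a n‖ ≤ 1)
    (hζ : IsPrimitiveRoot ζ p) (hp : 0 < p) (hfix : ζ ^ b ^ q = ζ) (hA : 1 < A)
    (horbit : ∀ j, ‖∏ i ∈ range q, twistedSum a ((ζ ^ j) ^ b ^ i) b‖ ≤ A) :
    ∃ C : ℝ, ∀ N : ℕ, 1 ≤ N →
      ‖∑ n ∈ range N with p ∣ n, a n‖ ≤ C * (N : ℝ) ^ (log A / (q * log b)) := by
  have hgrowth : ∀ j k N, N < (b ^ q) ^ k →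
      ‖twistedSum a (ζ ^ j) N‖ ≤ b ^ q / (A - 1) * (A ^ k - 1) := by
    intro j k N hN
    have hω : ‖ζ ^ j‖ ≤ 1 := by rw [norm_pow, hζ.norm'_eq_one hp.ne', one_pow]
    have hfixj : (ζ ^ j) ^ b ^ q = ζ ^ j := by rw [← pow_mul, mul_comm, pow_mul, hfix]
    refine le_of_forall_le_mul_div_add (f := fun N => ‖twistedSum a (ζ ^ j) N‖) hA
      (by simp [twistedSum]) (fun N => ?_) hN
    refine (norm_twistedSum_le_of_pow_pow_eq_self (by omega) hmul ha hω hfixj N).trans ?_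
    gcongr
    exact horbit j
  refine ⟨b ^ q / (A - 1) * A, fun N hN => ?_⟩
  have hNk : N < (b ^ q) ^ (Nat.log b N / q + 1) := by
    calc N < b ^ (Nat.log b N + 1) := Nat.lt_pow_succ_log_self hb N
      _ ≤ (b ^ q) ^ (Nat.log b N / q + 1) := by
        rw [← pow_mul]
        exact Nat.pow_le_pow_right (by omega) (Nat.lt_mul_div_succ _ hq)
  calc ‖∑ n ∈ range N with p ∣ n, a n‖
      ≤ b ^ q / (A - 1) * (A ^ (Nat.log b N / q + 1) - 1) :=
        norm_sum_filter_dvd_le hζ hp fun j => hgrowth j _ N hNk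
    _ ≤ b ^ q / (A - 1) * A * A ^ (Nat.log b N / q) := by
        rw [mul_assoc, ← pow_succ']
        gcongr
        linarith
    _ ≤ b ^ q / (A - 1) * A * (N : ℝ) ^ (log A / (q * log b)) := by
        gcongr
        exact pow_log_div_le_rpow hA.le hb hq (by omega)

end Rarefaction

open Rarefaction

theorem rarefaction_stmt2_general
    (b : ℕ) (hb : 2 ≤ b) (t : ℕ → ℝ)
    (hmul : ∀ n : ℕ, ∀ c : ℕ, c < b → t (b * n + c) = t n * t c)
    (hval : ∀ n : ℕ, t n = -1 ∨ t n = 0 ∨ t n = 1)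
    (p : ℕ) (hp : p.Prime) (hbp : b < p)
    (hgen : ∀ x : ZMod p, x ≠ 0 → ∃ k : ℕ, (b : ZMod p) ^ k = x)
    (ζ : ℂ) (hζ : ζ = Complex.exp (2 * Real.pi * Complex.I / p))
    (ξ : ℝ)
    (hξ : (ξ : ℂ) = ∏ j ∈ Finset.Icc 1 (p - 1), ∑ c ∈ Finset.range b, (t c : ℂ) * ζ ^ (j * c))
    (hdom : |ξ| > max ((∑ c ∈ Finset.range b, t c) ^ (p - 1)) 1) :
    ∃ C : ℝ, ∀ N : ℕ, 1 ≤ N →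
      |∑ n ∈ (Finset.range N).filter (fun n => p ∣ n), t n| ≤
        C * (N : ℝ) ^ (Real.log ξ / (((p : ℝ) - 1) * Real.log b)) := by
  have hpb : ¬ p ∣ b := fun h => (Nat.le_of_dvd (by omega) h).not_gt hbp
  have hprim : IsPrimitiveRoot ζ p := hζ ▸ Complex.isPrimitiveRoot_exp p hp.ne_zero
  have hnorm : ‖∏ k ∈ Icc 1 (p - 1), twistedSum (fun n => (t n : ℂ)) (ζ ^ k) b‖ = |ξ| := by
    simp only [twistedSum, ← pow_mul]
    rw [← hξ, Complex.norm_real, norm_eq_abs]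
  have horbit (j : ℕ) :
      ‖∏ i ∈ range (p - 1), twistedSum (fun n => (t n : ℂ)) ((ζ ^ j) ^ b ^ i) b‖ ≤ |ξ| := by
    rw [prod_twistedSum_orbit hp hgen hpb hprim.pow_eq_one]
    split_ifs
    · have hpeven : Even (p - 1) := hp.even_sub_one (by omega)
      rw [norm_pow, ← Complex.ofReal_sum, Complex.norm_real, norm_eq_abs, hpeven.pow_abs]
      exact (le_max_left _ _).trans hdom.le
    · exact hnorm.le
  obtain ⟨C, hC⟩ := norm_sum_filter_dvd_le_rpow (a := fun n => (t n : ℂ)) (by omega)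
    (by omega : 0 < p - 1) (fun n c hc => by simp [hmul n c hc])
    (fun n => by rcases hval n with h | h | h <;> simp [h]) hprim hp.pos
    (pow_pow_sub_one_eq_self hp hpb hprim.pow_eq_one) ((le_max_right _ _).trans_lt hdom) horbit
  refine ⟨C, fun N hN => ?_⟩
  have := hC N hN
  rwa [← Complex.ofReal_sum, Complex.norm_real, norm_eq_abs, log_abs, Nat.cast_pred hp.pos] at this

/-- Speed of growth of `p`-rarefied sums of a strongly `b`-multiplicative
sequence with values in `{-1,0,1}`, where `b < p` generates `(ℤ/p)ˣ` and the norm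
`ξ = ∏_{j=1}^{p-1} (∑_{c<b} t_c ζ_p^{jc})` satisfies `|ξ| > max((∑ t_c)^{p-1}, 1)`. -/
theorem rarefaction_stmt2
    (b : ℕ) (hb : 2 ≤ b) (t : ℕ → ℝ)
    (ht0 : t 0 = 1)
    (hmul : ∀ n : ℕ, ∀ c : ℕ, c < b → t (b * n + c) = t n * t c)
    (hval : ∀ n : ℕ, t n = -1 ∨ t n = 0 ∨ t n = 1)
    (p : ℕ) (hp : p.Prime) (hbp : b < p)
    (hgen : ∀ x : ZMod p, x ≠ 0 → ∃ k : ℕ, (b : ZMod p) ^ k = x)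
    (ζ : ℂ) (hζ : ζ = Complex.exp (2 * Real.pi * Complex.I / p))
    (ξ : ℝ)
    (hξ : (ξ : ℂ) = ∏ j ∈ Finset.Icc 1 (p - 1), ∑ c ∈ Finset.range b, (t c : ℂ) * ζ ^ (j * c))
    (hdom : |ξ| > max ((∑ c ∈ Finset.range b, t c) ^ (p - 1)) 1) :
    ∃ C : ℝ, ∀ N : ℕ, 1 ≤ N →
      |∑ n ∈ (Finset.range N).filter (fun n => p ∣ n), t n| ≤
        C * (N : ℝ) ^ (Real.log ξ / (((p : ℝ) - 1) * Real.log b)) :=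
  rarefaction_stmt2_general b hb t hmul hval p hp hbp hgen ζ hζ ξ hξ hdom
end

section
/- Let p be a prime number and 0 ≤ n < p an integer. Then A_0(n,p) − A_1(n,p) = (−1)^n. -/
open Finset

/-- `Acnt p n i` is the number of `n`-element subsets of the nonzero residues
modulo `p` whose sum is `i`. -/
def Acnt (p : ℕ) [NeZero p] (n : ℕ) (i : ZMod p) : ℕ :=
  (((Finset.univ.erase (0 : ZMod p)).powersetCard n).filter
    (fun X => X.sum id = i)).card

def Dcnt (p : ℕ) [NeZero p] (n : ℕ) (i : ZMod p) : ℕ :=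
  (((Finset.univ : Finset (ZMod p)).powersetCard n).filter
    (fun X => X.sum id = i)).card

lemma Dcnt_translate (p : ℕ) [NeZero p] (n : ℕ) (i t : ZMod p) :
    Dcnt p n (i + n * t) = Dcnt p n i := by
  classical
  unfold Dcnt
  refine Finset.card_bij' (fun X _ => X.image (· - t)) (fun Y _ => Y.image (· + t))
    ?_ ?_ ?_ ?_
  · intro X hX
    simp only [mem_filter, mem_powersetCard] at hX ⊢
    obtain ⟨⟨_, hcard⟩, hsum⟩ := hX
    have hinj : Set.InjOn (· - t) X := fun a _ b _ h => by simpa [sub_left_inj] using h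
    refine ⟨⟨subset_univ _, ?_⟩, ?_⟩
    · rw [Finset.card_image_of_injOn hinj, hcard]
    · rw [Finset.sum_image (fun a ha b hb h => hinj ha hb h)]
      have hsum' : ∑ x ∈ X, x = i + (n:ZMod p) * t := hsum
      simp only [id_eq]
      rw [Finset.sum_sub_distrib, hsum', Finset.sum_const, hcard]
      simp only [nsmul_eq_mul]
      ring
  · intro Y hY
    simp only [mem_filter, mem_powersetCard] at hY ⊢
    obtain ⟨⟨_, hcard⟩, hsum⟩ := hY
    have hinj : Set.InjOn (· + t) Y := fun a _ b _ h => by simpa using h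
    refine ⟨⟨subset_univ _, ?_⟩, ?_⟩
    · rw [Finset.card_image_of_injOn hinj, hcard]
    · rw [Finset.sum_image (fun a ha b hb h => hinj ha hb h)]
      have hsum' : ∑ x ∈ Y, x = i := hsum
      simp only [id_eq]
      rw [Finset.sum_add_distrib, hsum', Finset.sum_const, hcard]
      simp only [nsmul_eq_mul]
  · intro X _
    ext a
    simp only [mem_image]
    constructor
    · rintro ⟨b, ⟨c, hc, rfl⟩, rfl⟩; simpa using hc
    · intro ha; exact ⟨a - t, ⟨a, ha, rfl⟩, by simp⟩
  · intro Y _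
    ext a
    simp only [mem_image]
    constructor
    · rintro ⟨b, ⟨c, hc, rfl⟩, rfl⟩; simpa using hc
    · intro ha; exact ⟨a + t, ⟨a, ha, rfl⟩, by simp⟩

lemma Dcnt_const (p : ℕ) [NeZero p] (hp : p.Prime) (n : ℕ) (hn0 : 0 < n) (hn : n < p)
    (i j : ZMod p) : Dcnt p n i = Dcnt p n j := by
  haveI : Fact p.Prime := ⟨hp⟩
  have hnz : (n : ZMod p) ≠ 0 := by
    simpa [ZMod.natCast_eq_zero_iff] using (Nat.not_dvd_of_pos_of_lt hn0 hn)
  have := Dcnt_translate p n j ((i - j) * (n : ZMod p)⁻¹)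
  rw [show ((n : ZMod p) * ((i - j) * (n:ZMod p)⁻¹)) = i - j by
    field_simp] at this
  simpa using this

lemma Dcnt_split (p : ℕ) [NeZero p] (m : ℕ) (i : ZMod p) :
    Dcnt p (m + 1) i = Acnt p (m + 1) i + Acnt p m i := by
  classical
  unfold Dcnt Acnt
  set S := (((Finset.univ : Finset (ZMod p)).powersetCard (m+1)).filter
    (fun X => X.sum id = i)) with hS
  rw [← Finset.card_filter_add_card_filter_not (s := S)
    (p := fun X => (0:ZMod p) ∉ X)]
  simp only [not_not]
  congr 1
  · -- subsets not containing 0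
    congr 1
    ext X
    simp only [hS, mem_filter, mem_powersetCard, Finset.subset_erase]
    constructor
    · rintro ⟨⟨⟨_, hc⟩, hs⟩, h0⟩
      exact ⟨⟨⟨subset_univ _, h0⟩, hc⟩, hs⟩
    · rintro ⟨⟨⟨_, h0⟩, hc⟩, hs⟩
      exact ⟨⟨⟨subset_univ _, hc⟩, hs⟩, h0⟩
  · -- subsets containing 0 ↔ m-subsets of nonzero residues
    refine Finset.card_bij' (fun X _ => X.erase 0) (fun Y _ => insert (0:ZMod p) Y)
      ?_ ?_ ?_ ?_
    · intro X hX
      simp only [hS, mem_filter, mem_powersetCard] at hX ⊢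
      obtain ⟨⟨⟨_, hcard⟩, hsum⟩, h0⟩ := hX
      refine ⟨⟨?_, ?_⟩, ?_⟩
      · intro a ha
        simp only [mem_erase] at ha ⊢
        exact ⟨ha.1, mem_univ a⟩
      · rw [Finset.card_erase_of_mem h0, hcard]; omega
      · rw [← hsum, ← Finset.add_sum_erase _ _ h0]
        simp
    · intro Y hY
      simp only [hS, mem_filter, mem_powersetCard, Finset.subset_erase] at hY ⊢
      obtain ⟨⟨⟨_, h0⟩, hcard⟩, hsum⟩ := hY
      refine ⟨⟨⟨subset_univ _, ?_⟩, ?_⟩, ?_⟩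
      · rw [Finset.card_insert_of_notMem h0, hcard]
      · rw [Finset.sum_insert h0, hsum]; simp
      · exact mem_insert_self _ _
    · intro X hX
      simp only [hS, mem_filter] at hX
      exact Finset.insert_erase hX.2
    · intro Y hY
      simp only [mem_filter, mem_powersetCard, Finset.subset_erase] at hY
      exact Finset.erase_insert hY.1.1.2

/-- `A_0(n,p) - A_1(n,p) = (-1)^n` for a prime `p` and `0 ≤ n < p`. -/
theorem rarefaction_stmt4 (p : ℕ) [NeZero p] (hp : p.Prime) (n : ℕ) (hn : n < p) :
    (Acnt p n 0 : ℤ) - (Acnt p n 1 : ℤ) = (-1) ^ n := by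
  haveI : Fact p.Prime := ⟨hp⟩
  induction n with
  | zero =>
    have h1 : (1 : ZMod p) ≠ 0 := one_ne_zero
    simp [Acnt, Finset.powersetCard_zero, Finset.filter_singleton, h1.symm, h1]
  | succ m ih =>
    have hm : m < p := Nat.lt_of_succ_lt hn
    have key : Acnt p (m+1) 0 + Acnt p m 0 = Acnt p (m+1) 1 + Acnt p m 1 := by
      rw [← Dcnt_split, ← Dcnt_split]
      exact Dcnt_const p hp (m+1) (Nat.succ_pos m) hn 0 1
    have ihm := ih hm
    have hkey : (Acnt p (m+1) 0 : ℤ) + Acnt p m 0 = Acnt p (m+1) 1 + Acnt p m 1 := by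
      exact_mod_cast key
    rw [pow_succ]
    linarith [ihm]
end

section
/- Let n ≥ 0 be an integer and let p and p' be two primes both strictly greater than n. Then A_0(n,p) − A_1(n,p) = A_0(n,p') − A_1(n,p'). -/
/-!
Translating an `m`-element subset of a ring by `c` shifts its sum by `m * c`, so when `m` is
invertible the `m`-element subsets of the whole ring are equidistributed over the possible sums.
Sorting them by whether they contain `0` gives `A_i(m+1) + A_i(m)`, which is therefore independent
of `i`. Hence `A_0 - A_1` changes sign at each step and equals `(-1)^n` whenever `n < p`.
-/

open Finset

section SubsetSums

variable {G : Type*} [AddCommGroup G] [DecidableEq G]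

def subsetSumCount (s : Finset G) (m : ℕ) (g : G) : ℕ :=
  ((s.powersetCard m).filter (fun X => X.sum id = g)).card

lemma subsetSumCount_zero (s : Finset G) (g : G) :
    subsetSumCount s 0 g = if g = 0 then 1 else 0 := by
  by_cases hg : g = 0 <;> simp [subsetSumCount, powersetCard_zero, filter_singleton, hg, eq_comm]

lemma subsetSumCount_map_addRightEmbedding (s : Finset G) (m : ℕ) (g c : G) :
    subsetSumCount (s.map (addRightEmbedding c)) m (g + m • c) = subsetSumCount s m g := by
  rw [subsetSumCount, powersetCard_map, filter_map, card_map, subsetSumCount]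
  refine congrArg card (filter_congr fun X hX => ?_)
  rw [mem_powersetCard] at hX
  simp [sum_add_distrib, hX.2]

lemma subsetSumCount_univ_add_nsmul [Fintype G] (m : ℕ) (g c : G) :
    subsetSumCount univ m (g + m • c) = subsetSumCount univ m g := by
  simpa [map_univ_of_surjective (f := addRightEmbedding c) (add_right_surjective c)] using
    subsetSumCount_map_addRightEmbedding (univ : Finset G) m g c

lemma subsetSumCount_insert_succ {a : G} {s : Finset G} (ha : a ∉ s) (m : ℕ) (g : G) :
    subsetSumCount (insert a s) (m + 1) g =
      subsetSumCount s (m + 1) g + subsetSumCount s m (g - a) := by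
  have haX : ∀ X ∈ s.powersetCard m, a ∉ X := fun X hX h => ha ((mem_powersetCard.1 hX).1 h)
  have hdisj : Disjoint (s.powersetCard (m + 1)) ((s.powersetCard m).image (insert a)) := by
    refine disjoint_left.2 fun X hX hX' => ?_
    obtain ⟨Y, -, rfl⟩ := mem_image.1 hX'
    exact ha ((mem_powersetCard.1 hX).1 (mem_insert_self a Y))
  rw [subsetSumCount, powersetCard_succ_insert ha, filter_union,
    card_union_of_disjoint (disjoint_filter_filter hdisj), filter_image,
    card_image_of_injOn, subsetSumCount, subsetSumCount]
  · congr 2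
    refine filter_congr fun X hX => ?_
    rw [sum_insert (haX X hX), id, eq_sub_iff_add_eq', eq_comm]
  · intro X hX Y hY hXY
    rw [← erase_insert (haX X (mem_filter.1 hX).1), hXY, erase_insert (haX Y (mem_filter.1 hY).1)]

end SubsetSums

section Ring

variable {R : Type*} [Ring R] [Fintype R] [DecidableEq R]

lemma subsetSumCount_univ_eq_of_isUnit {m : ℕ} (hm : IsUnit (m : R)) (g h : R) :
    subsetSumCount univ m g = subsetSumCount univ m h := by
  obtain ⟨u, hu⟩ := hm
  have := subsetSumCount_univ_add_nsmul m g (↑u⁻¹ * (h - g))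
  rw [nsmul_eq_mul, ← hu, ← mul_assoc, u.mul_inv, one_mul, add_sub_cancel] at this
  exact this.symm

lemma subsetSumCount_erase_zero_succ_sub {m : ℕ} (hm : IsUnit ((m + 1 : ℕ) : R)) (g h : R) :
    (subsetSumCount (univ.erase 0) (m + 1) g : ℤ) - subsetSumCount (univ.erase 0) (m + 1) h =
      -((subsetSumCount (univ.erase 0) m g : ℤ) - subsetSumCount (univ.erase 0) m h) := by
  have hsplit (g : R) := subsetSumCount_insert_succ (notMem_erase 0 univ) m g
  simp only [insert_erase (mem_univ (0 : R)), sub_zero] at hsplit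
  have := subsetSumCount_univ_eq_of_isUnit hm g h
  rw [hsplit, hsplit] at this
  omega

end Ring

lemma subsetSumCount_erase_zero_sub_one {F : Type*} [Field F] [Fintype F] [DecidableEq F]
    {n : ℕ} (hn : n < ringChar F) :
    (subsetSumCount (univ.erase (0 : F)) n 0 : ℤ) - subsetSumCount (univ.erase (0 : F)) n 1 =
      (-1) ^ n := by
  induction n with
  | zero => simp [subsetSumCount_zero]
  | succ m ih =>
    have hm : IsUnit ((m + 1 : ℕ) : F) := by
      refine Ne.isUnit fun h => ?_
      rw [ringChar.spec] at h
      exact absurd (Nat.le_of_dvd m.succ_pos h) (not_le.2 hn)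
    rw [subsetSumCount_erase_zero_succ_sub hm, ih (by omega), pow_succ, mul_neg_one]

lemma Acnt_zero_sub_Acnt_one {p : ℕ} [NeZero p] (hp : p.Prime) {n : ℕ} (hn : n < p) :
    (Acnt p n 0 : ℤ) - Acnt p n 1 = (-1) ^ n :=
  have : Fact p.Prime := ⟨hp⟩
  subsetSumCount_erase_zero_sub_one ((ZMod.ringChar_zmod_n p).symm ▸ hn)

/-- The difference `A_0(n,p) - A_1(n,p)` does not depend on the
prime `p`, provided `p > n`. -/
theorem rarefaction_stmt6 (n : ℕ) (p p' : ℕ) [NeZero p] [NeZero p']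
    (hp : p.Prime) (hp' : p'.Prime) (hn : n < p) (hn' : n < p') :
    (Acnt p n 0 : ℤ) - (Acnt p n 1 : ℤ) = (Acnt p' n 0 : ℤ) - (Acnt p' n 1 : ℤ) := by
  rw [Acnt_zero_sub_Acnt_one hp hn, Acnt_zero_sub_Acnt_one hp' hn']
end

section
/- Let p be an odd prime, let i1, i2 be two distinct elements of {1,…,p−1}, let δ ∈ {0,…,p−1}, and let y0, y1, y2 be complex numbers. Then the elementary symmetric polynomial of degree p−1−δ of the p−1 complex numbers (y0 + ζ_p^{i1·j} y1 + ζ_p^{i2·j} y2), j = 1,…,p−1, equals Σ C(n0, δ) · Δ^{i1,i2}(n1,n2,p) · y0^{n0−δ} y1^{n1} y2^{n2}, where the sum runs over all nonnegative integers n0, n1, n2 with n0 + n1 + n2 = p−1 and n0 ≥ δ, and C(n0,δ) is a binomial coefficient. -/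
/-!
Expanding `∏_{j ∈ S} (y0 + ζ^{i1 j} y1 + ζ^{i2 j} y2)` writes the left side as a sum over
disjoint pairs `(X1, X2)` of nonzero residues, and such a pair lies in exactly
`C(p - 1 - |X1| - |X2|, δ)` of the `(p - 1 - δ)`-sets `S`. Grouping by `(|X1|, |X2|)`, the
coefficient left over is the character sum `∑ ψ(i1 ΣX1 + i2 ΣX2) = ∑_i A_i ψ(i)` for
`ψ(x) = ζ^x` on `ℤ/p`. Multiplying by a nonzero residue permutes the pairs, so `A_i = A_1` for
`i ≠ 0`, and `∑_i ψ(i) = 0` leaves `A_0 - A_1 = Δ`.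
-/

open Finset

/-- `Acount p i1 i2 n1 n2 i` is the number of pairs `(X1, X2)` of disjoint subsets of
the nonzero residues mod `p` with `|X1| = n1`, `|X2| = n2` and
`i1·ΣX1 + i2·ΣX2 = i` in `ℤ/p`. -/
def Acount (p : ℕ) [NeZero p] (i1 i2 n1 n2 : ℕ) (i : ZMod p) : ℕ :=
  (((((Finset.univ.erase (0 : ZMod p)).powersetCard n1) ×ˢ
      ((Finset.univ.erase (0 : ZMod p)).powersetCard n2)).filter
    (fun X => X.1 ∩ X.2 = ∅ ∧
      (i1 : ZMod p) * X.1.sum id + (i2 : ZMod p) * X.2.sum id = i))).card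

/-- `Δ^{i1,i2}(n1,n2,p) = A_0^{i1,i2}(n1,n2,p) - A_1^{i1,i2}(n1,n2,p)`. -/
def Delta (p : ℕ) [NeZero p] (i1 i2 n1 n2 : ℕ) : ℤ :=
  (Acount p i1 i2 n1 n2 0 : ℤ) - (Acount p i1 i2 n1 n2 1 : ℤ)

namespace Finset

variable {ι R : Type*} [DecidableEq ι]

def disjointPairs (s : Finset ι) : Finset (Finset ι × Finset ι) :=
  {X ∈ s.powerset ×ˢ s.powerset | Disjoint X.1 X.2}

theorem mem_disjointPairs {s : Finset ι} {X : Finset ι × Finset ι} :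
    X ∈ s.disjointPairs ↔ X.1 ⊆ s ∧ X.2 ⊆ s ∧ Disjoint X.1 X.2 := by
  simp [disjointPairs, and_assoc]

theorem mem_disjointPairs_iff_subset_sdiff {s : Finset ι} {X : Finset ι × Finset ι} :
    X ∈ s.disjointPairs ↔ X.1 ⊆ s ∧ X.2 ⊆ s \ X.1 := by
  rw [mem_disjointPairs, subset_sdiff, disjoint_comm]

theorem card_add_card_le_of_mem_disjointPairs {s : Finset ι} {X : Finset ι × Finset ι}
    (hX : X ∈ s.disjointPairs) : #X.1 + #X.2 ≤ #s := by
  obtain ⟨h₁, h₂, hd⟩ := mem_disjointPairs.1 hX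
  rw [← card_union_of_disjoint hd]
  exact card_le_card (union_subset h₁ h₂)

theorem prod_add_add_eq_sum_disjointPairs [CommSemiring R] (s : Finset ι) (a : R) (f g : ι → R) :
    ∏ j ∈ s, (a + f j + g j) =
      ∑ X ∈ s.disjointPairs, a ^ (#s - #X.1 - #X.2) * ((∏ j ∈ X.1, f j) * ∏ j ∈ X.2, g j) := by
  calc ∏ j ∈ s, (a + f j + g j) = ∏ j ∈ s, (f j + (g j + a)) :=
        prod_congr rfl fun _ _ ↦ by ring
    _ = ∑ X₁ ∈ s.powerset, ∑ X₂ ∈ (s \ X₁).powerset,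
          a ^ #((s \ X₁) \ X₂) * ((∏ j ∈ X₁, f j) * ∏ j ∈ X₂, g j) := by
        simp_rw [prod_add, prod_const, mul_sum]
        refine sum_congr rfl fun _ _ ↦ sum_congr rfl fun _ _ ↦ by ring
    _ = ∑ X ∈ s.disjointPairs, a ^ #((s \ X.1) \ X.2) * ((∏ j ∈ X.1, f j) * ∏ j ∈ X.2, g j) :=
        (sum_finset_product' _ _ _ fun _ ↦ by
          rw [mem_disjointPairs_iff_subset_sdiff, mem_powerset, mem_powerset]).symm
    _ = _ := by
        refine sum_congr rfl fun X hX ↦ ?_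
        obtain ⟨h₁, h₂⟩ := mem_disjointPairs_iff_subset_sdiff.1 hX
        rw [card_sdiff_of_subset h₂, card_sdiff_of_subset h₁]

theorem card_filter_powersetCard_sub_subset {s t : Finset ι} {δ : ℕ} (hst : s ⊆ t) (hδ : δ ≤ #t) :
    #{u ∈ t.powersetCard (#t - δ) | s ⊆ u} = (#t - #s).choose δ := by
  by_cases hs : #s ≤ #t - δ
  · rw [card_filter_powersetCard_subset s t _ hst hs, ← Nat.choose_symm (by omega)]
    congr 1
    omega
  · have := card_le_card hst
    rw [Nat.choose_eq_zero_of_lt (by omega), card_eq_zero, filter_eq_empty_iff]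
    intro u hu hsu
    have := card_le_card hsu
    rw [(mem_powersetCard.1 hu).2] at this
    omega

theorem sum_powersetCard_sum_disjointPairs [AddCommMonoid R] {s : Finset ι} {δ : ℕ} (hδ : δ ≤ #s)
    (w : Finset ι × Finset ι → R) :
    ∑ u ∈ s.powersetCard (#s - δ), ∑ X ∈ u.disjointPairs, w X =
      ∑ X ∈ s.disjointPairs, (#s - #X.1 - #X.2).choose δ • w X := by
  rw [sum_comm' (t' := s.disjointPairs)
    (s' := fun X ↦ {u ∈ s.powersetCard (#s - δ) | X.1 ∪ X.2 ⊆ u})]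
  · refine sum_congr rfl fun X hX ↦ ?_
    obtain ⟨h₁, h₂, hd⟩ := mem_disjointPairs.1 hX
    rw [sum_const, card_filter_powersetCard_sub_subset (union_subset h₁ h₂) hδ,
      card_union_of_disjoint hd, Nat.sub_sub]
  · intro u X
    simp only [mem_filter, mem_powersetCard, mem_disjointPairs, union_subset_iff]
    constructor
    · rintro ⟨⟨hu, hcard⟩, h₁, h₂, hd⟩
      exact ⟨⟨⟨hu, hcard⟩, h₁, h₂⟩, h₁.trans hu, h₂.trans hu, hd⟩
    · rintro ⟨⟨⟨hu, hcard⟩, h₁, h₂⟩, -, -, hd⟩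
      exact ⟨⟨hu, hcard⟩, h₁, h₂, hd⟩

theorem sum_powersetCard_prod_add_add [CommSemiring R] {s : Finset ι} {m δ : ℕ} (hs : #s = m)
    (hδ : δ ≤ m) (a : R) (f g : ι → R) :
    ∑ u ∈ s.powersetCard (m - δ), ∏ j ∈ u, (a + f j + g j) =
      ∑ n ∈ (range (m + 1) ×ˢ range (m + 1)).filter (fun n ↦ n.1 + n.2 + δ ≤ m),
        ((m - n.1 - n.2).choose δ : R) * a ^ (m - n.1 - n.2 - δ) *
          ∑ X ∈ s.disjointPairs with (#X.1, #X.2) = n, (∏ j ∈ X.1, f j) * ∏ j ∈ X.2, g j := by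
  subst hs
  set w : Finset ι × Finset ι → R := fun X ↦ (∏ j ∈ X.1, f j) * ∏ j ∈ X.2, g j
  set c : ℕ × ℕ → R := fun n ↦ ((#s - n.1 - n.2).choose δ : R) * a ^ (#s - n.1 - n.2 - δ)
  calc ∑ u ∈ s.powersetCard (#s - δ), ∏ j ∈ u, (a + f j + g j)
      = ∑ u ∈ s.powersetCard (#s - δ), ∑ X ∈ u.disjointPairs,
          a ^ (#s - #X.1 - #X.2 - δ) * w X := by
        refine sum_congr rfl fun u hu ↦ ?_
        rw [prod_add_add_eq_sum_disjointPairs, (mem_powersetCard.1 hu).2]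
        refine sum_congr rfl fun X _ ↦ ?_
        rw [show #s - δ - #X.1 - #X.2 = #s - #X.1 - #X.2 - δ by omega]
    _ = ∑ X ∈ s.disjointPairs, c (#X.1, #X.2) * w X := by
        rw [sum_powersetCard_sum_disjointPairs hδ]
        refine sum_congr rfl fun X _ ↦ ?_
        simp only [c, nsmul_eq_mul, mul_assoc]
    _ = ∑ X ∈ s.disjointPairs with (#X.1, #X.2) ∈
          (range (#s + 1) ×ˢ range (#s + 1)).filter (fun n ↦ n.1 + n.2 + δ ≤ #s),
          c (#X.1, #X.2) * w X := by
        refine (sum_filter_of_ne fun X hX hne ↦ ?_).symm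
        have hle := card_add_card_le_of_mem_disjointPairs hX
        have : δ ≤ #s - #X.1 - #X.2 := by
          by_contra! h
          simp [c, Nat.choose_eq_zero_of_lt h] at hne
        simp only [mem_filter, mem_product, mem_range]
        omega
    _ = _ := by
        rw [← sum_fiberwise_eq_sum_filter]
        refine sum_congr rfl fun n _ ↦ ?_
        rw [mul_sum]
        exact sum_congr rfl fun X hX ↦ by rw [(mem_filter.1 hX).2]

end Finset

theorem AddChar.map_sum_eq_prod {A M ι : Type*} [AddCommMonoid A] [CommMonoid M] (ψ : AddChar A M)
    (s : Finset ι) (f : ι → A) : ψ (∑ i ∈ s, f i) = ∏ i ∈ s, ψ (f i) :=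
  map_prod ψ.toMonoidHom (fun i ↦ Multiplicative.ofAdd (f i)) s

section ZModPairs

variable {p : ℕ} [NeZero p]

theorem acount_eq_card (i1 i2 n1 n2 : ℕ) (i : ZMod p) :
    Acount p i1 i2 n1 n2 i = #{X ∈ (univ.erase (0 : ZMod p)).disjointPairs |
      (#X.1, #X.2) = (n1, n2) ∧ i1 * ∑ x ∈ X.1, x + i2 * ∑ x ∈ X.2, x = i} := by
  unfold Acount
  congr 1
  ext X
  simp only [mem_filter, mem_product, mem_powersetCard, mem_disjointPairs, Prod.mk.injEq,
    disjoint_iff_inter_eq_empty]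
  tauto

theorem acount_mul_left [Fact p.Prime] (i1 i2 n1 n2 : ℕ) {c : ZMod p} (hc : c ≠ 0) (i : ZMod p) :
    Acount p i1 i2 n1 n2 (c * i) = Acount p i1 i2 n1 n2 i := by
  set e := Equiv.mulLeft₀ c hc
  refine (card_equiv (e.finsetCongr.prodCongr e.finsetCongr) fun X ↦ ?_).symm
  have hsum (Y : Finset (ZMod p)) : (Y.map e.toEmbedding).sum id = c * Y.sum id := by
    simp [sum_map, mul_sum, e]
  simp only [mem_filter, mem_product, Equiv.prodCongr_apply, Prod.map, Equiv.finsetCongr_apply,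
    ← map_inter, map_eq_empty, mem_powersetCard, card_map, subset_erase, subset_univ, true_and,
    mem_map_equiv, hsum]
  rw [show e.symm 0 = 0 by simp [e], mul_left_comm (i1 : ZMod p), mul_left_comm (i2 : ZMod p),
    ← mul_add, mul_right_inj' hc]

theorem sum_disjointPairs_addChar_eq_delta [Fact p.Prime] {R : Type*} [CommRing R] [IsDomain R]
    {ψ : AddChar (ZMod p) R} (hψ : ψ ≠ 1) (i1 i2 : ℕ) (n : ℕ × ℕ) :
    ∑ X ∈ (univ.erase (0 : ZMod p)).disjointPairs with (#X.1, #X.2) = n,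
      ψ (i1 * ∑ x ∈ X.1, x + i2 * ∑ x ∈ X.2, x) = Delta p i1 i2 n.1 n.2 := by
  set A := Acount p i1 i2 n.1 n.2
  set σ : Finset (ZMod p) × Finset (ZMod p) → ZMod p :=
    fun X ↦ i1 * ∑ x ∈ X.1, x + i2 * ∑ x ∈ X.2, x
  have hfiber (i : ZMod p) :
      ∑ X ∈ (univ.erase 0).disjointPairs with (#X.1, #X.2) = n ∧ σ X = i, ψ (σ X) = A i * ψ i := by
    rw [sum_congr rfl fun X hX ↦ by rw [(mem_filter.1 hX).2.2], sum_const, nsmul_eq_mul]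
    simp only [A, σ, acount_eq_card, Prod.mk.eta]
  have hA (i : ZMod p) (hi : i ≠ 0) : A i = A 1 := by simpa using acount_mul_left i1 i2 n.1 n.2 hi 1
  calc _ = ∑ i, (A i : R) * ψ i := by
        rw [← sum_fiberwise _ σ]
        exact sum_congr rfl fun i _ ↦ by rw [filter_filter, hfiber]
    _ = A 0 + A 1 * (∑ i, ψ i - ψ 0) := by
        rw [← add_sum_erase _ _ (mem_univ 0), ← sum_erase_eq_sub (mem_univ 0), mul_sum,
          AddChar.map_zero_eq_one, mul_one]
        exact congrArg _ (sum_congr rfl fun i hi ↦ by rw [hA i (ne_of_mem_erase hi)])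
    _ = Delta p i1 i2 n.1 n.2 := by
        rw [AddChar.sum_eq_zero_of_ne_one hψ, AddChar.map_zero_eq_one, Delta]
        push_cast
        ring

theorem sum_disjointPairs_prod_addChar_mul [Fact p.Prime] {R : Type*} [CommRing R] [IsDomain R]
    {ψ : AddChar (ZMod p) R} (hψ : ψ ≠ 1) (i1 i2 : ℕ) (y1 y2 : R) (n : ℕ × ℕ) :
    ∑ X ∈ (univ.erase (0 : ZMod p)).disjointPairs with (#X.1, #X.2) = n,
        (∏ x ∈ X.1, ψ (i1 * x) * y1) * ∏ x ∈ X.2, ψ (i2 * x) * y2 =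
      Delta p i1 i2 n.1 n.2 * y1 ^ n.1 * y2 ^ n.2 := by
  obtain ⟨n1, n2⟩ := n
  rw [← sum_disjointPairs_addChar_eq_delta hψ, sum_mul, sum_mul]
  refine sum_congr rfl fun X hX ↦ ?_
  obtain ⟨h₁, h₂⟩ := Prod.mk.inj (mem_filter.1 hX).2
  simp only [prod_mul_distrib, prod_const, ← AddChar.map_sum_eq_prod, AddChar.map_add_eq_mul,
    h₁, h₂]
  rw [← mul_sum, ← mul_sum]
  ring

end ZModPairs

theorem ZMod.map_val_univ_erase_zero (p : ℕ) [NeZero p] :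
    (univ.erase (0 : ZMod p)).map ⟨ZMod.val, ZMod.val_injective p⟩ = Icc 1 (p - 1) := by
  ext j
  simp only [mem_map, mem_erase, mem_univ, and_true, Function.Embedding.coeFn_mk, mem_Icc]
  constructor
  · rintro ⟨x, hx, rfl⟩
    have := ZMod.val_lt x
    have := (ZMod.val_ne_zero x).2 hx
    omega
  · rintro ⟨h₁, h₂⟩
    have hj : j < p := by omega
    refine ⟨j, fun h ↦ ?_, ZMod.val_cast_of_lt hj⟩
    rw [← ZMod.val_cast_of_lt hj, h, ZMod.val_zero] at h₁
    omega

theorem pow_eq_stdAddChar {p : ℕ} [NeZero p] {ζ : ℂ}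
    (hζ : ζ = Complex.exp (2 * Real.pi * Complex.I / p)) (j : ℕ) :
    ζ ^ j = ZMod.stdAddChar (j : ZMod p) := by
  rw [hζ, ← Complex.exp_nat_mul, ← Int.cast_natCast (R := ZMod p), ZMod.stdAddChar_coe]
  congr 1
  push_cast
  ring

theorem rarefaction_stmt9_general (p : ℕ) [NeZero p] (hp : p.Prime)
    (i1 i2 : ℕ)
    (δ : ℕ) (hδ : δ ≤ p - 1)
    (ζ : ℂ) (hζ : ζ = Complex.exp (2 * Real.pi * Complex.I / p))
    (y0 y1 y2 : ℂ) :
    ∑ S ∈ (Finset.Icc 1 (p - 1)).powersetCard (p - 1 - δ),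
        ∏ j ∈ S, (y0 + ζ ^ (i1 * j) * y1 + ζ ^ (i2 * j) * y2) =
      ∑ n ∈ (Finset.range p ×ˢ Finset.range p).filter (fun n => n.1 + n.2 + δ ≤ p - 1),
        ((p - 1 - n.1 - n.2).choose δ : ℂ) * (Delta p i1 i2 n.1 n.2 : ℂ) *
          y0 ^ (p - 1 - n.1 - n.2 - δ) * y1 ^ n.1 * y2 ^ n.2 := by
  have := Fact.mk hp
  set ψ : AddChar (ZMod p) ℂ := ZMod.stdAddChar
  have hψ : ψ ≠ 1 := by simpa using ZMod.isPrimitive_stdAddChar p one_ne_zero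
  have hΩ : #(univ.erase (0 : ZMod p)) = p - 1 := by
    rw [card_erase_of_mem (mem_univ _), card_univ, ZMod.card]
  have hζψ (k : ℕ) (x : ZMod p) : ζ ^ (k * x.val) = ψ (k * x) := by
    rw [pow_eq_stdAddChar hζ]
    push_cast [ZMod.natCast_val, ZMod.cast_id']
    rfl
  rw [← ZMod.map_val_univ_erase_zero, powersetCard_map, sum_map]
  simp only [RelEmbedding.coe_toEmbedding, mapEmbedding_apply, prod_map,
    Function.Embedding.coeFn_mk, hζψ]
  rw [sum_powersetCard_prod_add_add hΩ hδ, Nat.sub_add_cancel hp.one_le]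
  refine sum_congr rfl fun n _ ↦ ?_
  rw [sum_disjointPairs_prod_addChar_mul hψ]
  ring

/-- Expansion of the elementary symmetric polynomials of the numbers
`y0 + ζ_p^{i1 j} y1 + ζ_p^{i2 j} y2`, `j = 1,…,p-1`, in terms of the coefficients
`Δ^{i1,i2}(n1,n2,p)`. -/
theorem rarefaction_stmt9 (p : ℕ) [NeZero p] (hp : p.Prime) (hodd : Odd p)
    (i1 i2 : ℕ) (hi1 : 1 ≤ i1 ∧ i1 ≤ p - 1) (hi2 : 1 ≤ i2 ∧ i2 ≤ p - 1) (hne : i1 ≠ i2)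
    (δ : ℕ) (hδ : δ ≤ p - 1)
    (ζ : ℂ) (hζ : ζ = Complex.exp (2 * Real.pi * Complex.I / p))
    (y0 y1 y2 : ℂ) :
    ∑ S ∈ (Finset.Icc 1 (p - 1)).powersetCard (p - 1 - δ),
        ∏ j ∈ S, (y0 + ζ ^ (i1 * j) * y1 + ζ ^ (i2 * j) * y2) =
      ∑ n ∈ (Finset.range p ×ˢ Finset.range p).filter (fun n => n.1 + n.2 + δ ≤ p - 1),
        ((p - 1 - n.1 - n.2).choose δ : ℂ) * (Delta p i1 i2 n.1 n.2 : ℂ) *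
          y0 ^ (p - 1 - n.1 - n.2 - δ) * y1 ^ n.1 * y2 ^ n.2 :=
  rarefaction_stmt9_general p hp i1 i2 δ hδ ζ hζ y0 y1 y2
end

section
/- Let p be an odd prime, let i1, i2 ∈ {1,…,p−1} with i1 ≠ i2, and let n1, n2 ∈ {1,…,p−2} with n1 + n2 < p. Assume that for all integers a, b with 0 ≤ a ≤ n1, 0 ≤ b ≤ n2 and (a,b) ≠ (0,0), p does not divide a·i1 + b·i2. Then Δ^{i1,i2}(n1,n2,p) = (−1)^{n1+n2} · C(n1+n2, n1). -/
open Finset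

namespace Stmt10

variable (p : ℕ) [NeZero p]

/-- The set whose cardinality is `Acount`. -/
def Aset (i1 i2 n1 n2 : ℕ) (i : ZMod p) : Finset (Finset (ZMod p) × Finset (ZMod p)) :=
  ((((Finset.univ.erase (0 : ZMod p)).powersetCard n1) ×ˢ
      ((Finset.univ.erase (0 : ZMod p)).powersetCard n2)).filter
    (fun X => X.1 ∩ X.2 = ∅ ∧
      (i1 : ZMod p) * X.1.sum id + (i2 : ZMod p) * X.2.sum id = i))

lemma Acount_eq (i1 i2 n1 n2 : ℕ) (i : ZMod p) :
    Acount p i1 i2 n1 n2 i = (Aset p i1 i2 n1 n2 i).card := rfl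

/-- The analogous set where subsets of all of `ZMod p` (including `0`) are allowed. -/
def Bset (i1 i2 n1 n2 : ℕ) (i : ZMod p) : Finset (Finset (ZMod p) × Finset (ZMod p)) :=
  ((((Finset.univ : Finset (ZMod p)).powersetCard n1) ×ˢ
      ((Finset.univ : Finset (ZMod p)).powersetCard n2)).filter
    (fun X => X.1 ∩ X.2 = ∅ ∧
      (i1 : ZMod p) * X.1.sum id + (i2 : ZMod p) * X.2.sum id = i))

lemma mem_Bset {i1 i2 n1 n2 : ℕ} {i : ZMod p} {X : Finset (ZMod p) × Finset (ZMod p)} :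
    X ∈ Bset p i1 i2 n1 n2 i ↔ X.1.card = n1 ∧ X.2.card = n2 ∧ X.1 ∩ X.2 = ∅ ∧
      (i1 : ZMod p) * X.1.sum id + (i2 : ZMod p) * X.2.sum id = i := by
  simp [Bset, Finset.mem_powersetCard, and_assoc]

lemma mem_Aset {i1 i2 n1 n2 : ℕ} {i : ZMod p} {X : Finset (ZMod p) × Finset (ZMod p)} :
    X ∈ Aset p i1 i2 n1 n2 i ↔ (0 : ZMod p) ∉ X.1 ∧ (0 : ZMod p) ∉ X.2 ∧
      X.1.card = n1 ∧ X.2.card = n2 ∧ X.1 ∩ X.2 = ∅ ∧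
      (i1 : ZMod p) * X.1.sum id + (i2 : ZMod p) * X.2.sum id = i := by
  simp [Aset, Finset.mem_powersetCard, Finset.subset_erase, and_assoc]
  tauto

lemma sum_image_add (X : Finset (ZMod p)) (c : ZMod p) :
    ((X.image (· + c)).sum id) = X.sum id + (X.card : ZMod p) * c := by
  rw [Finset.sum_image (fun x _ y _ h => by simpa using h)]
  simp only [id, Finset.sum_add_distrib, Finset.sum_const, nsmul_eq_mul]

lemma shift_mem {i1 i2 n1 n2 : ℕ} {i c : ZMod p} {X : Finset (ZMod p) × Finset (ZMod p)}
    (hX : X ∈ Bset p i1 i2 n1 n2 i) :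
    (X.1.image (· + c), X.2.image (· + c)) ∈
      Bset p i1 i2 n1 n2 (i + ((i1 : ZMod p) * n1 + (i2 : ZMod p) * n2) * c) := by
  rw [mem_Bset] at hX ⊢
  obtain ⟨h1, h2, hd, hs⟩ := hX
  have inj : Function.Injective (fun x : ZMod p => x + c) := add_left_injective c
  refine ⟨by rw [Finset.card_image_of_injective _ inj, h1],
          by rw [Finset.card_image_of_injective _ inj, h2],
          by rw [← Finset.image_inter _ _ inj, hd, Finset.image_empty], ?_⟩
  rw [sum_image_add, sum_image_add, h1, h2, ← hs]
  ring

lemma image_shift_shift (X : Finset (ZMod p)) (c : ZMod p) :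
    (X.image (· + c)).image (· + (-c)) = X := by
  ext x; simp

lemma Bset_shift (i1 i2 n1 n2 : ℕ) (i c : ZMod p) :
    (Bset p i1 i2 n1 n2 i).card
      = (Bset p i1 i2 n1 n2 (i + ((i1 : ZMod p) * n1 + (i2 : ZMod p) * n2) * c)).card := by
  refine Finset.card_bij' (fun X _ => (X.1.image (· + c), X.2.image (· + c)))
    (fun X _ => (X.1.image (· + (-c)), X.2.image (· + (-c)))) ?_ ?_ ?_ ?_
  · intro X hX
    exact shift_mem p hX
  · intro X hX
    have h : i + ((i1 : ZMod p) * n1 + (i2 : ZMod p) * n2) * c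
        + ((i1 : ZMod p) * n1 + (i2 : ZMod p) * n2) * (-c) = i := by ring
    have h2 := shift_mem p (c := -c) hX
    rwa [h] at h2
  · intro X hX
    have h1 : (X.1.image (· + c)).image (· + (-c)) = X.1 := image_shift_shift p X.1 c
    have h2 : (X.2.image (· + c)).image (· + (-c)) = X.2 := image_shift_shift p X.2 c
    exact Prod.ext h1 h2
  · intro X hX
    have key : ∀ Y : Finset (ZMod p), (Y.image (· + (-c))).image (· + c) = Y := by
      intro Y; ext x; simp
    exact Prod.ext (key X.1) (key X.2)

lemma Bset_const (hp : p.Prime) {i1 i2 n1 n2 : ℕ}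
    (h : ((i1 : ZMod p) * n1 + (i2 : ZMod p) * n2) ≠ 0) (i j : ZMod p) :
    (Bset p i1 i2 n1 n2 i).card = (Bset p i1 i2 n1 n2 j).card := by
  haveI := Fact.mk hp
  set s : ZMod p := (i1 : ZMod p) * n1 + (i2 : ZMod p) * n2 with hs
  have := Bset_shift p i1 i2 n1 n2 i ((j - i) * s⁻¹)
  rw [this]
  congr 1
  rw [mul_comm (j - i), ← mul_assoc, mul_inv_cancel₀ h, one_mul]
  ring

lemma piece_none (i1 i2 n1 n2 : ℕ) (i : ZMod p) :
    (Bset p i1 i2 n1 n2 i).filter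
      (fun X => ¬ (0 : ZMod p) ∈ X.1 ∧ ¬ (0 : ZMod p) ∈ X.2)
      = Aset p i1 i2 n1 n2 i := by
  ext X
  rw [Finset.mem_filter, mem_Bset, mem_Aset]
  tauto

lemma piece_one_zero (i1 i2 n2 : ℕ) (i : ZMod p) :
    (Bset p i1 i2 0 n2 i).filter (fun X => (0 : ZMod p) ∈ X.1) = ∅ := by
  apply Finset.filter_false_of_mem
  intro X hX
  rw [mem_Bset] at hX
  rw [Finset.card_eq_zero.mp hX.1]
  exact Finset.notMem_empty _

lemma piece_two_zero (i1 i2 n1 : ℕ) (i : ZMod p) :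
    (Bset p i1 i2 n1 0 i).filter
      (fun X => ¬ (0 : ZMod p) ∈ X.1 ∧ (0 : ZMod p) ∈ X.2) = ∅ := by
  apply Finset.filter_false_of_mem
  intro X hX
  rw [mem_Bset] at hX
  rw [Finset.card_eq_zero.mp hX.2.1]
  simp

lemma piece_one (i1 i2 m n2 : ℕ) (i : ZMod p) :
    ((Bset p i1 i2 (m + 1) n2 i).filter (fun X => (0 : ZMod p) ∈ X.1)).card
      = Acount p i1 i2 m n2 i := by
  rw [Acount_eq]
  refine Finset.card_bij' (fun X _ => (X.1.erase 0, X.2))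
    (fun Y _ => (insert (0 : ZMod p) Y.1, Y.2)) ?_ ?_ ?_ ?_
  · intro X hX
    rw [Finset.mem_filter, mem_Bset] at hX
    obtain ⟨⟨h1, h2, hd, hs⟩, h0⟩ := hX
    have h02 : (0 : ZMod p) ∉ X.2 := by
      intro h
      have : (0 : ZMod p) ∈ X.1 ∩ X.2 := Finset.mem_inter.mpr ⟨h0, h⟩
      rw [hd] at this
      exact Finset.notMem_empty _ this
    rw [mem_Aset]
    refine ⟨Finset.notMem_erase _ _, h02,
      by rw [Finset.card_erase_of_mem h0, h1]; omega, h2, ?_, ?_⟩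
    · apply Finset.subset_empty.mp
      rw [← hd]
      exact Finset.inter_subset_inter (Finset.erase_subset _ _) le_rfl
    · rw [Finset.sum_erase _ (show id (0 : ZMod p) = 0 from rfl)]
      exact hs
  · intro Y hY
    rw [mem_Aset] at hY
    obtain ⟨h01, h02, h1, h2, hd, hs⟩ := hY
    rw [Finset.mem_filter, mem_Bset]
    refine ⟨⟨by rw [Finset.card_insert_of_notMem h01, h1], h2, ?_, ?_⟩,
      Finset.mem_insert_self _ _⟩
    · rw [Finset.insert_inter_of_notMem h02, hd]
    · rw [Finset.sum_insert h01]
      simpa using hs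
  · intro X hX
    rw [Finset.mem_filter] at hX
    exact Prod.ext (Finset.insert_erase hX.2) rfl
  · intro Y hY
    rw [mem_Aset] at hY
    exact Prod.ext (Finset.erase_insert hY.1) rfl

lemma piece_two (i1 i2 n1 m : ℕ) (i : ZMod p) :
    ((Bset p i1 i2 n1 (m + 1) i).filter
      (fun X => ¬ (0 : ZMod p) ∈ X.1 ∧ (0 : ZMod p) ∈ X.2)).card
      = Acount p i1 i2 n1 m i := by
  rw [Acount_eq]
  refine Finset.card_bij' (fun X _ => (X.1, X.2.erase 0))
    (fun Y _ => (Y.1, insert (0 : ZMod p) Y.2)) ?_ ?_ ?_ ?_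
  · intro X hX
    rw [Finset.mem_filter, mem_Bset] at hX
    obtain ⟨⟨h1, h2, hd, hs⟩, h01, h0⟩ := hX
    rw [mem_Aset]
    refine ⟨h01, Finset.notMem_erase _ _, h1,
      by rw [Finset.card_erase_of_mem h0, h2]; omega, ?_, ?_⟩
    · apply Finset.subset_empty.mp
      rw [← hd]
      exact Finset.inter_subset_inter le_rfl (Finset.erase_subset _ _)
    · rw [Finset.sum_erase _ (show id (0 : ZMod p) = 0 from rfl)]
      exact hs
  · intro Y hY
    rw [mem_Aset] at hY
    obtain ⟨h01, h02, h1, h2, hd, hs⟩ := hY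
    rw [Finset.mem_filter, mem_Bset]
    refine ⟨⟨h1, by rw [Finset.card_insert_of_notMem h02, h2], ?_, ?_⟩,
      h01, Finset.mem_insert_self _ _⟩
    · rw [Finset.inter_comm, Finset.insert_inter_of_notMem h01, Finset.inter_comm, hd]
    · rw [Finset.sum_insert h02]
      simpa using hs
  · intro X hX
    rw [Finset.mem_filter] at hX
    exact Prod.ext rfl (Finset.insert_erase hX.2.2)
  · intro Y hY
    rw [mem_Aset] at hY
    exact Prod.ext rfl (Finset.erase_insert hY.2.1)

lemma decomp (i1 i2 n1 n2 : ℕ) (i : ZMod p) :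
    (Bset p i1 i2 n1 n2 i).card
      = Acount p i1 i2 n1 n2 i
        + (if n1 = 0 then 0 else Acount p i1 i2 (n1 - 1) n2 i)
        + (if n2 = 0 then 0 else Acount p i1 i2 n1 (n2 - 1) i) := by
  classical
  set S := Bset p i1 i2 n1 n2 i with hS
  have h1 : (S.filter (fun X => (0 : ZMod p) ∈ X.1)).card
      + (S.filter (fun X => ¬ (0 : ZMod p) ∈ X.1)).card = S.card :=
    Finset.card_filter_add_card_filter_not _
  have h2 : ((S.filter (fun X => ¬ (0 : ZMod p) ∈ X.1)).filter
        (fun X => (0 : ZMod p) ∈ X.2)).card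
      + ((S.filter (fun X => ¬ (0 : ZMod p) ∈ X.1)).filter
        (fun X => ¬ (0 : ZMod p) ∈ X.2)).card
      = (S.filter (fun X => ¬ (0 : ZMod p) ∈ X.1)).card :=
    Finset.card_filter_add_card_filter_not _
  rw [Finset.filter_filter, Finset.filter_filter] at h2
  have hnone : (S.filter (fun X => ¬ (0 : ZMod p) ∈ X.1 ∧ ¬ (0 : ZMod p) ∈ X.2)).card
      = Acount p i1 i2 n1 n2 i := by
    rw [hS, piece_none, Acount_eq]
  have hone : (S.filter (fun X => (0 : ZMod p) ∈ X.1)).card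
      = (if n1 = 0 then 0 else Acount p i1 i2 (n1 - 1) n2 i) := by
    cases n1 with
    | zero => rw [hS, piece_one_zero]; simp
    | succ m => rw [hS, piece_one]; simp
  have htwo : (S.filter (fun X => ¬ (0 : ZMod p) ∈ X.1 ∧ (0 : ZMod p) ∈ X.2)).card
      = (if n2 = 0 then 0 else Acount p i1 i2 n1 (n2 - 1) i) := by
    cases n2 with
    | zero => rw [hS, piece_two_zero]; simp
    | succ m => rw [hS, piece_two]; simp
  omega

/-- The Pascal-type recurrence for `Δ`. -/
lemma delta_rec (hp : p.Prime) (i1 i2 n1 n2 : ℕ)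
    (h : ((i1 : ZMod p) * n1 + (i2 : ZMod p) * n2) ≠ 0) :
    ((Acount p i1 i2 n1 n2 0 : ℤ) - Acount p i1 i2 n1 n2 1)
      + (if n1 = 0 then 0 else
          (Acount p i1 i2 (n1 - 1) n2 0 : ℤ) - Acount p i1 i2 (n1 - 1) n2 1)
      + (if n2 = 0 then 0 else
          (Acount p i1 i2 n1 (n2 - 1) 0 : ℤ) - Acount p i1 i2 n1 (n2 - 1) 1) = 0 := by
  have hB := Bset_const p hp h (0 : ZMod p) 1
  have h0 := decomp p i1 i2 n1 n2 0
  have h1 := decomp p i1 i2 n1 n2 1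
  rw [h0, h1] at hB
  split_ifs at hB ⊢ <;> push_cast <;> omega

lemma Acount_base_zero (i1 i2 : ℕ) : Acount p i1 i2 0 0 (0 : ZMod p) = 1 := by
  rw [Acount_eq]
  have : Aset p i1 i2 0 0 (0 : ZMod p) = {((∅ : Finset (ZMod p)), (∅ : Finset (ZMod p)))} := by
    ext X
    rw [mem_Aset, Finset.mem_singleton]
    constructor
    · rintro ⟨-, -, h1, h2, -, -⟩
      rw [Prod.ext_iff]
      exact ⟨Finset.card_eq_zero.mp h1, Finset.card_eq_zero.mp h2⟩
    · rintro rfl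
      simp
  rw [this, Finset.card_singleton]

lemma Acount_base_one (hp : p.Prime) (i1 i2 : ℕ) : Acount p i1 i2 0 0 (1 : ZMod p) = 0 := by
  rw [Acount_eq]
  rw [Finset.card_eq_zero]
  rw [Finset.eq_empty_iff_forall_notMem]
  intro X hX
  rw [mem_Aset] at hX
  obtain ⟨-, -, h1, h2, -, hs⟩ := hX
  rw [Finset.card_eq_zero.mp h1, Finset.card_eq_zero.mp h2] at hs
  simp only [Finset.sum_empty, mul_zero, add_zero] at hs
  haveI := Fact.mk hp
  exact zero_ne_one hs

lemma main (i1 i2 : ℕ) (hp : p.Prime) : ∀ (N a b : ℕ), a + b ≤ N →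
    (∀ a' b' : ℕ, a' ≤ a → b' ≤ b → (a', b') ≠ (0, 0) → ¬ (p ∣ a' * i1 + b' * i2)) →
    (Acount p i1 i2 a b 0 : ℤ) - Acount p i1 i2 a b 1
      = (-1) ^ (a + b) * (a + b).choose a := by
  intro N
  induction N with
  | zero =>
    intro a b hab _
    obtain ⟨rfl, rfl⟩ : a = 0 ∧ b = 0 := by omega
    rw [Acount_base_zero p i1 i2, Acount_base_one p hp i1 i2]
    simp
  | succ N ih =>
    intro a b hab hno
    by_cases hz : a = 0 ∧ b = 0
    · obtain ⟨rfl, rfl⟩ := hz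
      rw [Acount_base_zero p i1 i2, Acount_base_one p hp i1 i2]
      simp
    · have hdvd : ¬ (p ∣ a * i1 + b * i2) := by
        apply hno a b le_rfl le_rfl
        simp only [ne_eq, Prod.mk.injEq]
        tauto
      have hcast : ((i1 : ZMod p) * a + (i2 : ZMod p) * b) ≠ 0 := by
        intro hc
        apply hdvd
        have hzz : ((a * i1 + b * i2 : ℕ) : ZMod p) = 0 := by
          push_cast
          linear_combination hc
        exact (ZMod.natCast_eq_zero_iff _ _).mp hzz
      have hrec := delta_rec p hp i1 i2 a b hcast
      rcases Nat.eq_zero_or_pos a with rfl | ha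
      · -- a = 0, b = m + 1
        obtain ⟨m, rfl⟩ : ∃ m, b = m + 1 := by
          rcases b with _ | m
          · exact absurd ⟨rfl, rfl⟩ hz
          · exact ⟨m, rfl⟩
        have hihm := ih 0 m (by omega)
          (fun a' b' ha' hb' h' => hno a' b' ha' (by omega) h')
        rw [if_pos rfl, if_neg (Nat.succ_ne_zero m), Nat.add_sub_cancel] at hrec
        rw [hihm] at hrec
        have heq : (Acount p i1 i2 0 (m + 1) 0 : ℤ) - Acount p i1 i2 0 (m + 1) 1
            = -((-1) ^ (0 + m) * (0 + m).choose 0) := by linarith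
        rw [heq]
        simp [pow_succ]
      rcases Nat.eq_zero_or_pos b with rfl | hb
      · -- b = 0, a = k + 1
        obtain ⟨k, rfl⟩ : ∃ k, a = k + 1 := by
          rcases a with _ | k
          · omega
          · exact ⟨k, rfl⟩
        have hihk := ih k 0 (by omega)
          (fun a' b' ha' hb' h' => hno a' b' (by omega) hb' h')
        rw [if_neg (Nat.succ_ne_zero k), if_pos rfl, Nat.add_sub_cancel] at hrec
        rw [hihk] at hrec
        have heq : (Acount p i1 i2 (k + 1) 0 0 : ℤ) - Acount p i1 i2 (k + 1) 0 1
            = -((-1) ^ (k + 0) * (k + 0).choose k) := by linarith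
        rw [heq]
        simp [pow_succ]
      -- a = k + 1, b = m + 1
      obtain ⟨k, rfl⟩ : ∃ k, a = k + 1 := ⟨a - 1, by omega⟩
      obtain ⟨m, rfl⟩ : ∃ m, b = m + 1 := ⟨b - 1, by omega⟩
      have hih1 := ih k (m + 1) (by omega)
        (fun a' b' ha' hb' h' => hno a' b' (by omega) hb' h')
      have hih2 := ih (k + 1) m (by omega)
        (fun a' b' ha' hb' h' => hno a' b' ha' (by omega) h')
      rw [if_neg (Nat.succ_ne_zero k), if_neg (Nat.succ_ne_zero m),
        Nat.add_sub_cancel, Nat.add_sub_cancel] at hrec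
      rw [hih1, hih2] at hrec
      have hgoal : (Acount p i1 i2 (k + 1) (m + 1) 0 : ℤ)
          - Acount p i1 i2 (k + 1) (m + 1) 1
          = -((-1) ^ (k + (m + 1)) * (k + (m + 1)).choose k)
            - (-1) ^ (k + 1 + m) * (k + 1 + m).choose (k + 1) := by linarith
      rw [hgoal]
      have hch : (k + 1 + (m + 1)).choose (k + 1)
          = (k + (m + 1)).choose k + (k + 1 + m).choose (k + 1) := by
        have : k + 1 + (m + 1) = (k + m + 1) + 1 := by ring
        rw [this, Nat.choose_succ_succ]
        congr 2 <;> omega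
      rw [hch]
      have h1 : k + (m + 1) = k + m + 1 := by ring
      have h2 : k + 1 + m = k + m + 1 := by ring
      have h3 : k + 1 + (m + 1) = k + m + 2 := by ring
      rw [h1, h2, h3]
      push_cast
      ring

end Stmt10

theorem rarefaction_stmt10 (p : ℕ) [NeZero p] (hp : p.Prime) (hodd : Odd p)
    (i1 i2 : ℕ) (hi1 : 1 ≤ i1 ∧ i1 ≤ p - 1) (hi2 : 1 ≤ i2 ∧ i2 ≤ p - 1) (hne : i1 ≠ i2)
    (n1 n2 : ℕ) (hn1 : 1 ≤ n1 ∧ n1 ≤ p - 2) (hn2 : 1 ≤ n2 ∧ n2 ≤ p - 2)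
    (hsum : n1 + n2 < p)
    (hnohindrance : ∀ a b : ℕ, a ≤ n1 → b ≤ n2 → (a, b) ≠ (0, 0) →
      ¬ (p ∣ a * i1 + b * i2)) :
    Delta p i1 i2 n1 n2 = (-1) ^ (n1 + n2) * (n1 + n2).choose n1 := by
  exact Stmt10.main p i1 i2 hp (n1 + n2) n1 n2 le_rfl hnohindrance
end

section
/- Let p be an odd prime, let i1, i2 ∈ {1,…,p−1} with i1 ≠ i2, and let n1, n2 ∈ {1,…,p−2} with n1 + n2 < p. Then C^{i1,i2}_0(n1,n2,p) − C^{i1,i2}_1(n1,n2,p) ≡ n1·C^{i1,i2}_1(n1−1,n2,p) + n2·C^{i1,i2}_1(n1,n2−1,p) − n1·C^{i1,i2}_0(n1−1,n2,p) − n2·C^{i1,i2}_0(n1,n2−1,p) (mod p); moreover, if p does not divide n1·i1 + n2·i2, this congruence is an equality of integers. -/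
/-!
Let `D(i)` count the injective sequences `x` (the value `0` now allowed) of weighted sum `i`.
Such a sequence takes the value `0` at most once, and deleting that entry gives
`D(i) = C_i(n1,n2) + n1·C_i(n1-1,n2) + n2·C_i(n1,n2-1)`; so the claim is `p ∣ D(0) - D(1)`,
with `D(0) = D(1)` when `p ∤ M := n1·i1 + n2·i2`.
Adding a constant `t` to every entry keeps `x` injective and shifts its weighted sum by `M·t`.
If `M ≠ 0` in `ℤ/p`, this makes `D` constant. If `M = 0`, it identifies the `p` fibres of
`x ↦ x_0` among the solutions, so `p ∣ D(i)`.
-/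

open Finset

/-- `Ccount p i1 i2 n1 n2 i` is the number of sequences `(x_1,…,x_{n1+n2})` of pairwise
distinct nonzero residues mod `p` such that
`i1·(x_1+…+x_{n1}) + i2·(x_{n1+1}+…+x_{n1+n2}) = i` in `ℤ/p`. -/
def Ccount (p : ℕ) [NeZero p] (i1 i2 n1 n2 : ℕ) (i : ZMod p) : ℕ :=
  ((Finset.univ : Finset (Fin (n1 + n2) → ZMod p)).filter
    (fun x : Fin (n1 + n2) → ZMod p => Function.Injective x ∧ (∀ k, x k ≠ 0) ∧
      (i1 : ZMod p) * (∑ k, if k.val < n1 then x k else 0) +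
        (i2 : ZMod p) * (∑ k, if k.val < n1 then 0 else x k) = i)).card

open Function

section WeightedSolutions

variable {ι R : Type*} [Fintype ι] [DecidableEq ι] [Fintype R] [DecidableEq R]

section Semiring

variable [Semiring R]

def injSolutions (w : ι → R) (i : R) : Finset (ι → R) :=
  {x | Injective x ∧ ∑ k, w k * x k = i}

def injNonzeroSolutions (w : ι → R) (i : R) : Finset (ι → R) :=
  {x | Injective x ∧ (∀ k, x k ≠ 0) ∧ ∑ k, w k * x k = i}

theorem card_injNonzeroSolutions_comp_equiv {κ : Type*} [Fintype κ] [DecidableEq κ]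
    (w : ι → R) (e : κ ≃ ι) (i : R) :
    #(injNonzeroSolutions (w ∘ e) i) = #(injNonzeroSolutions w i) := by
  refine (card_equiv (e.symm.arrowCongr (Equiv.refl R)) fun x => ?_).symm
  have hx : e.symm.arrowCongr (Equiv.refl R) x = x ∘ e := rfl
  simp only [injNonzeroSolutions, mem_filter, mem_univ, true_and, hx, e.injective_comp,
    comp_apply, e.forall_congr_right (q := fun k => x k ≠ 0), e.sum_comp (fun k => w k * x k)]

theorem card_filter_injSolutions_apply_eq_zero (w : ι → R) (i : R) (k : ι) :
    #{x ∈ injSolutions w i | x k = 0} =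
      #(injNonzeroSolutions (fun j : {j // j ≠ k} => w j.1) i) := by
  refine card_nbij' (fun x j => x j) (fun y j => if h : j = k then 0 else y ⟨j, h⟩) ?_ ?_ ?_ ?_
  · rintro x hx
    simp only [coe_filter, injSolutions, injNonzeroSolutions, mem_filter, mem_univ, true_and,
      Set.mem_ofPred_eq] at hx ⊢
    obtain ⟨⟨hinj, hsum⟩, hk⟩ := hx
    refine ⟨fun a b hab => Subtype.ext (hinj hab),
      fun j hj => j.2 (hinj (hj.trans hk.symm)), ?_⟩
    rwa [Fintype.sum_eq_add_sum_subtype_ne _ k, hk, mul_zero, zero_add] at hsum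
  · rintro y hy
    simp only [coe_filter, injSolutions, injNonzeroSolutions, mem_filter, mem_univ, true_and,
      Set.mem_ofPred_eq] at hy ⊢
    obtain ⟨hinj, hne, hsum⟩ := hy
    refine ⟨⟨fun a b hab => ?_, ?_⟩, by simp⟩
    · by_cases ha : a = k <;> by_cases hb : b = k <;>
        simp only [ha, hb, dite_true, dite_false] at hab
      · exact ha.trans hb.symm
      · exact absurd hab.symm (hne _)
      · exact absurd hab (hne _)
      · exact congrArg Subtype.val (hinj hab)
    · have hy : ∀ j : {j // j ≠ k}, (if h : (j : ι) = k then 0 else y ⟨j, h⟩) = y j :=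
        fun j => dif_neg j.2
      rw [Fintype.sum_eq_add_sum_subtype_ne _ k]
      simpa only [hy, dite_true, mul_zero, zero_add] using hsum
  · rintro x hx
    simp only [coe_filter, Set.mem_ofPred_eq] at hx
    funext j
    by_cases hj : j = k <;> simp [hj, hx.2]
  · rintro y -
    funext j
    simp [j.2]

theorem card_injSolutions_eq_add_sum_filter (w : ι → R) (i : R) :
    #(injSolutions w i) =
      #(injNonzeroSolutions w i) + ∑ k, #{x ∈ injSolutions w i | x k = 0} := by
  have hnonzero : {x ∈ injSolutions w i | ∀ k, x k ≠ 0} = injNonzeroSolutions w i := by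
    ext x
    simp only [injSolutions, injNonzeroSolutions, mem_filter, mem_univ, true_and]
    tauto
  have hzero : {x ∈ injSolutions w i | ¬ ∀ k, x k ≠ 0} =
      univ.biUnion fun k => {x ∈ injSolutions w i | x k = 0} := by
    ext x
    simp
  have hdisj : Set.PairwiseDisjoint ↑(univ : Finset ι)
      fun k => {x ∈ injSolutions w i | x k = 0} := by
    intro k _ l _ hkl
    refine disjoint_left.2 fun x hk hl => hkl ?_
    simp only [injSolutions, mem_filter, mem_univ, true_and] at hk hl
    exact hk.1.1 (hk.2.trans hl.2.symm)
  rw [← card_filter_add_card_filter_not (p := fun x => ∀ k, x k ≠ 0), hnonzero, hzero,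
    card_biUnion hdisj]

theorem card_injSolutions_eq_add_sum (w : ι → R) (i : R) :
    #(injSolutions w i) = #(injNonzeroSolutions w i) +
      ∑ k : ι, #(injNonzeroSolutions (fun j : {j // j ≠ k} => w j.1) i) := by
  simp only [card_injSolutions_eq_add_sum_filter, card_filter_injSolutions_apply_eq_zero]

end Semiring

section Ring

variable [Ring R]

theorem add_const_mem_injSolutions_iff (w x : ι → R) (i t : R) :
    x + (fun _ => t) ∈ injSolutions w (i + (∑ k, w k) * t) ↔ x ∈ injSolutions w i := by
  have hinj : Injective (x + fun _ => t) ↔ Injective x :=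
    (add_left_injective t).of_comp_iff x
  simp only [injSolutions, mem_filter, mem_univ, true_and, hinj, Pi.add_apply, mul_add,
    sum_add_distrib, sum_mul, add_left_inj]

theorem card_injSolutions_add_mul (w : ι → R) (i t : R) :
    #(injSolutions w (i + (∑ k, w k) * t)) = #(injSolutions w i) :=
  (card_equiv (Equiv.addRight fun _ => t) fun x =>
    (add_const_mem_injSolutions_iff w x i t).symm).symm

theorem card_injSolutions_eq_of_isUnit (w : ι → R) (hw : IsUnit (∑ k, w k)) (i j : R) :
    #(injSolutions w i) = #(injSolutions w j) := by
  obtain ⟨u, hu⟩ := hw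
  have : j = i + (∑ k, w k) * (↑u⁻¹ * (j - i)) := by rw [← hu, u.mul_inv_cancel_left]; abel
  rw [this, card_injSolutions_add_mul]

theorem card_dvd_card_injSolutions [Nonempty ι] (w : ι → R) (hw : ∑ k, w k = 0) (i : R) :
    Fintype.card R ∣ #(injSolutions w i) := by
  obtain ⟨k⟩ := ‹Nonempty ι›
  have hfiber (t : R) :
      #{x ∈ injSolutions w i | x k = t} = #{x ∈ injSolutions w i | x k = 0} := by
    refine (card_equiv (Equiv.addRight fun _ => t) fun x => ?_).symm
    have hx := add_const_mem_injSolutions_iff w x i t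
    rw [hw, zero_mul, add_zero] at hx
    simp only [mem_filter, Equiv.coe_addRight, Pi.add_apply, hx, add_eq_right]
  rw [card_eq_sum_card_fiberwise (f := fun x => x k) (t := univ) fun _ _ => mem_univ _,
    sum_congr rfl fun t _ => hfiber t, sum_const, card_univ, smul_eq_mul]
  exact dvd_mul_right _ _

end Ring

end WeightedSolutions

section ColorWeight

variable {R α β : Type*}

def colorWeight (α β : Type*) (a b : R) : α ⊕ β → R :=
  Sum.elim (fun _ => a) (fun _ => b)

theorem sum_colorWeight [AddCommMonoid R] [Fintype α] [Fintype β] (a b : R) :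
    ∑ j, colorWeight α β a b j = Fintype.card α • a + Fintype.card β • b := by
  simp [colorWeight, Fintype.sum_sum_type]

variable [Semiring R] [Fintype R] [DecidableEq R]
  [Fintype α] [DecidableEq α] [Fintype β] [DecidableEq β]

theorem card_injNonzeroSolutions_colorWeight_congr {α' β' : Type*} [Fintype α'] [DecidableEq α']
    [Fintype β'] [DecidableEq β'] (e : α ≃ α') (f : β ≃ β') (a b i : R) :
    #(injNonzeroSolutions (colorWeight α β a b) i) =
      #(injNonzeroSolutions (colorWeight α' β' a b) i) := by
  have hw : colorWeight α' β' a b ∘ e.sumCongr f = colorWeight α β a b := by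
    funext j; cases j <;> rfl
  rw [← hw, card_injNonzeroSolutions_comp_equiv]

theorem card_injNonzeroSolutions_colorWeight_ne_inl (k : α) (a b i : R) :
    #(injNonzeroSolutions (fun j : {j // j ≠ Sum.inl k} => colorWeight α β a b j.1) i) =
      #(injNonzeroSolutions (colorWeight {a // a ≠ k} β a b) i) := by
  let e : {a // a ≠ k} ⊕ β ≃ {j // j ≠ Sum.inl k} :=
    ((Equiv.subtypeSum (p := (· ≠ Sum.inl k))).trans
      (Equiv.sumCongr (Equiv.subtypeEquivRight fun _ => Sum.inl_injective.ne_iff)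
        (Equiv.subtypeUnivEquiv fun _ => Sum.inr_ne_inl))).symm
  have hw : (fun j : {j // j ≠ Sum.inl k} => colorWeight α β a b j.1) ∘ e =
      colorWeight {a // a ≠ k} β a b := by
    funext j; cases j <;> rfl
  rw [← hw, card_injNonzeroSolutions_comp_equiv]

theorem card_injNonzeroSolutions_colorWeight_ne_inr (k : β) (a b i : R) :
    #(injNonzeroSolutions (fun j : {j // j ≠ Sum.inr k} => colorWeight α β a b j.1) i) =
      #(injNonzeroSolutions (colorWeight α {b // b ≠ k} a b) i) := by
  let e : α ⊕ {b // b ≠ k} ≃ {j // j ≠ Sum.inr k} :=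
    ((Equiv.subtypeSum (p := (· ≠ Sum.inr k))).trans
      (Equiv.sumCongr (Equiv.subtypeUnivEquiv fun _ => Sum.inl_ne_inr)
        (Equiv.subtypeEquivRight fun _ => Sum.inr_injective.ne_iff))).symm
  have hw : (fun j : {j // j ≠ Sum.inr k} => colorWeight α β a b j.1) ∘ e =
      colorWeight α {b // b ≠ k} a b := by
    funext j; cases j <;> rfl
  rw [← hw, card_injNonzeroSolutions_comp_equiv]

end ColorWeight

section Ccount

variable {p : ℕ} [NeZero p]

theorem Ccount_eq_card_injNonzeroSolutions (i1 i2 n1 n2 : ℕ) (i : ZMod p) :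
    Ccount p i1 i2 n1 n2 i =
      #(injNonzeroSolutions (colorWeight (Fin n1) (Fin n2) (i1 : ZMod p) i2) i) := by
  refine card_equiv (finSumFinEquiv.symm.arrowCongr (Equiv.refl _)) fun x => ?_
  have hx : finSumFinEquiv.symm.arrowCongr (Equiv.refl _) x = x ∘ finSumFinEquiv := rfl
  simp only [injNonzeroSolutions, mem_filter, mem_univ, true_and, hx,
    finSumFinEquiv.injective_comp, comp_apply,
    finSumFinEquiv.forall_congr_right (q := fun k => x k ≠ 0)]
  simp [Fin.sum_univ_add, Fintype.sum_sum_type, colorWeight, mul_sum]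

theorem card_injNonzeroSolutions_colorWeight {α β : Type*} [Fintype α] [DecidableEq α]
    [Fintype β] [DecidableEq β] (i1 i2 : ℕ) (i : ZMod p) :
    #(injNonzeroSolutions (colorWeight α β (i1 : ZMod p) i2) i) =
      Ccount p i1 i2 (Fintype.card α) (Fintype.card β) i := by
  rw [Ccount_eq_card_injNonzeroSolutions]
  exact card_injNonzeroSolutions_colorWeight_congr (Fintype.equivFin α) (Fintype.equivFin β) _ _ _

theorem card_injSolutions_colorWeight (i1 i2 n1 n2 : ℕ) (i : ZMod p) :
    #(injSolutions (colorWeight (Fin n1) (Fin n2) (i1 : ZMod p) i2) i) =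
      Ccount p i1 i2 n1 n2 i + n1 * Ccount p i1 i2 (n1 - 1) n2 i +
        n2 * Ccount p i1 i2 n1 (n2 - 1) i := by
  rw [card_injSolutions_eq_add_sum, Fintype.sum_sum_type]
  simp only [card_injNonzeroSolutions_colorWeight_ne_inl,
    card_injNonzeroSolutions_colorWeight_ne_inr, card_injNonzeroSolutions_colorWeight]
  simp [Fintype.card_subtype_compl, add_assoc]

end Ccount

theorem rarefaction_stmt11_general (p : ℕ) [NeZero p] (hp : p.Prime)
    (i1 i2 : ℕ) (n1 n2 : ℕ) (hn1 : 1 ≤ n1 ∧ n1 ≤ p - 2) :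
    ((Ccount p i1 i2 n1 n2 0 : ℤ) - (Ccount p i1 i2 n1 n2 1 : ℤ) ≡
      (n1 : ℤ) * (Ccount p i1 i2 (n1 - 1) n2 1 : ℤ) +
        (n2 : ℤ) * (Ccount p i1 i2 n1 (n2 - 1) 1 : ℤ) -
        (n1 : ℤ) * (Ccount p i1 i2 (n1 - 1) n2 0 : ℤ) -
        (n2 : ℤ) * (Ccount p i1 i2 n1 (n2 - 1) 0 : ℤ) [ZMOD (p : ℤ)]) ∧
    (¬ (p ∣ n1 * i1 + n2 * i2) →
      (Ccount p i1 i2 n1 n2 0 : ℤ) - (Ccount p i1 i2 n1 n2 1 : ℤ) =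
        (n1 : ℤ) * (Ccount p i1 i2 (n1 - 1) n2 1 : ℤ) +
          (n2 : ℤ) * (Ccount p i1 i2 n1 (n2 - 1) 1 : ℤ) -
          (n1 : ℤ) * (Ccount p i1 i2 (n1 - 1) n2 0 : ℤ) -
          (n2 : ℤ) * (Ccount p i1 i2 n1 (n2 - 1) 0 : ℤ)) := by
  have : Fact p.Prime := ⟨hp⟩
  have : Nonempty (Fin n1 ⊕ Fin n2) := ⟨.inl ⟨0, hn1.1⟩⟩
  set w := colorWeight (Fin n1) (Fin n2) (i1 : ZMod p) (i2 : ZMod p)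
  set D : ZMod p → ℤ := fun i => #(injSolutions w i)
  have hD : ∀ i, D i = Ccount p i1 i2 n1 n2 i + n1 * Ccount p i1 i2 (n1 - 1) n2 i +
      n2 * Ccount p i1 i2 n1 (n2 - 1) i := fun i => by
    simp only [D, w, card_injSolutions_colorWeight]; push_cast; ring
  have hw : ∑ j, w j = ((n1 * i1 + n2 * i2 : ℕ) : ZMod p) := by
    rw [sum_colorWeight]; simp
  have hD_eq (h : ¬ p ∣ n1 * i1 + n2 * i2) : D 0 = D 1 := by
    have hunit : IsUnit (∑ j, w j) := by
      rwa [hw, isUnit_iff_ne_zero, Ne, ZMod.natCast_eq_zero_iff]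
    simp only [D, card_injSolutions_eq_of_isUnit w hunit 0 1]
  have hD_dvd : (p : ℤ) ∣ D 1 - D 0 := by
    by_cases h : p ∣ n1 * i1 + n2 * i2
    · have hw0 : ∑ j, w j = 0 := by rw [hw]; exact (ZMod.natCast_eq_zero_iff _ _).2 h
      have hdvd := fun i => card_dvd_card_injSolutions w hw0 i
      rw [ZMod.card] at hdvd
      exact dvd_sub (Int.natCast_dvd_natCast.2 (hdvd 1)) (Int.natCast_dvd_natCast.2 (hdvd 0))
    · simp [hD_eq h]
  refine ⟨Int.modEq_iff_dvd.2 ?_, fun h => ?_⟩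
  · convert hD_dvd using 1; rw [hD, hD]; ring
  · linear_combination hD_eq h - hD 0 + hD 1

/-- "colored" Pascal's equation. -/
theorem rarefaction_stmt11 (p : ℕ) [NeZero p] (hp : p.Prime) (hodd : Odd p)
    (i1 i2 : ℕ) (hi1 : 1 ≤ i1 ∧ i1 ≤ p - 1) (hi2 : 1 ≤ i2 ∧ i2 ≤ p - 1) (hne : i1 ≠ i2)
    (n1 n2 : ℕ) (hn1 : 1 ≤ n1 ∧ n1 ≤ p - 2) (hn2 : 1 ≤ n2 ∧ n2 ≤ p - 2)
    (hsum : n1 + n2 < p) :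
    ((Ccount p i1 i2 n1 n2 0 : ℤ) - (Ccount p i1 i2 n1 n2 1 : ℤ) ≡
      (n1 : ℤ) * (Ccount p i1 i2 (n1 - 1) n2 1 : ℤ) +
        (n2 : ℤ) * (Ccount p i1 i2 n1 (n2 - 1) 1 : ℤ) -
        (n1 : ℤ) * (Ccount p i1 i2 (n1 - 1) n2 0 : ℤ) -
        (n2 : ℤ) * (Ccount p i1 i2 n1 (n2 - 1) 0 : ℤ) [ZMOD (p : ℤ)]) ∧
    (¬ (p ∣ n1 * i1 + n2 * i2) →
      (Ccount p i1 i2 n1 n2 0 : ℤ) - (Ccount p i1 i2 n1 n2 1 : ℤ) =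
        (n1 : ℤ) * (Ccount p i1 i2 (n1 - 1) n2 1 : ℤ) +
          (n2 : ℤ) * (Ccount p i1 i2 n1 (n2 - 1) 1 : ℤ) -
          (n1 : ℤ) * (Ccount p i1 i2 (n1 - 1) n2 0 : ℤ) -
          (n2 : ℤ) * (Ccount p i1 i2 n1 (n2 - 1) 0 : ℤ)) :=
  rarefaction_stmt11_general p hp i1 i2 n1 n2 hn1
end

section
/- Let p be an odd prime, let i1, i2 be two distinct elements of {1,…,p−1}, and let d be an integer-valued function on pairs of integers (n1,n2) with n1 ≥ −1 and n2 ≥ −1, satisfying: (i) d(0,0) = 1; (ii) d(n1,n2) = 0 whenever n1 = −1 or n2 = −1 or n1+n2 ≥ p; (iii) d(n1,n2) + d(n1−1,n2) + d(n1,n2−1) = 0 for all n1, n2 ≥ 0 such that p does not divide n1·i1 + n2·i2. Then d(n1,n2) = Δ^{i1,i2}(n1,n2,p) for all n1, n2 ≥ 0 with n1+n2 ≤ p−1. -/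
open Finset

/- ### Auxiliary definitions and lemmas -/

def Aset (p : ℕ) [NeZero p] (i1 i2 n1 n2 : ℕ) (i : ZMod p) :
    Finset (Finset (ZMod p) × Finset (ZMod p)) :=
  ((((Finset.univ.erase (0 : ZMod p)).powersetCard n1) ×ˢ
      ((Finset.univ.erase (0 : ZMod p)).powersetCard n2)).filter
    (fun X => X.1 ∩ X.2 = ∅ ∧
      (i1 : ZMod p) * X.1.sum id + (i2 : ZMod p) * X.2.sum id = i))

def Bset (p : ℕ) [NeZero p] (i1 i2 n1 n2 : ℕ) (i : ZMod p) :
    Finset (Finset (ZMod p) × Finset (ZMod p)) :=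
  (((Finset.univ : Finset (ZMod p)).powersetCard n1 ×ˢ
      (Finset.univ : Finset (ZMod p)).powersetCard n2).filter
    (fun X => X.1 ∩ X.2 = ∅ ∧
      (i1 : ZMod p) * X.1.sum id + (i2 : ZMod p) * X.2.sum id = i))

lemma Acount_eq (p : ℕ) [NeZero p] (i1 i2 n1 n2 : ℕ) (i : ZMod p) :
    Acount p i1 i2 n1 n2 i = (Aset p i1 i2 n1 n2 i).card := rfl

lemma mem_Aset (p : ℕ) [NeZero p] {i1 i2 n1 n2 : ℕ} {i : ZMod p}
    {X : Finset (ZMod p) × Finset (ZMod p)} :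
    X ∈ Aset p i1 i2 n1 n2 i ↔
      ((0 : ZMod p) ∉ X.1 ∧ X.1.card = n1) ∧ ((0 : ZMod p) ∉ X.2 ∧ X.2.card = n2) ∧
        X.1 ∩ X.2 = ∅ ∧ (i1 : ZMod p) * X.1.sum id + (i2 : ZMod p) * X.2.sum id = i := by
  simp only [Aset, Finset.mem_filter, Finset.mem_product, Finset.mem_powersetCard,
    Finset.subset_erase, Finset.subset_univ, true_and]
  tauto

lemma mem_Bset (p : ℕ) [NeZero p] {i1 i2 n1 n2 : ℕ} {i : ZMod p}
    {X : Finset (ZMod p) × Finset (ZMod p)} :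
    X ∈ Bset p i1 i2 n1 n2 i ↔
      X.1.card = n1 ∧ X.2.card = n2 ∧
        X.1 ∩ X.2 = ∅ ∧ (i1 : ZMod p) * X.1.sum id + (i2 : ZMod p) * X.2.sum id = i := by
  simp only [Bset, Finset.mem_filter, Finset.mem_product, Finset.mem_powersetCard,
    Finset.subset_univ, true_and]
  tauto

lemma Acount_zero_zero (p : ℕ) [NeZero p] (i1 i2 : ℕ) (i : ZMod p) :
    Acount p i1 i2 0 0 i = if i = 0 then 1 else 0 := by
  classical
  unfold Acount
  rw [Finset.powersetCard_zero]
  split_ifs with h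
  · subst h
    rw [Finset.card_eq_one]
    refine ⟨(∅, ∅), ?_⟩
    ext x
    simp only [Finset.mem_filter, Finset.mem_product, Finset.mem_singleton]
    constructor
    · rintro ⟨⟨h1, h2⟩, _⟩
      exact Prod.ext h1 h2
    · rintro rfl
      simp
  · rw [Finset.card_eq_zero, Finset.filter_eq_empty_iff]
    rintro ⟨X1, X2⟩ hmem
    simp only [Finset.mem_product, Finset.mem_singleton] at hmem
    obtain ⟨rfl, rfl⟩ := hmem
    simp only [Finset.empty_inter, Finset.sum_empty, mul_zero, add_zero, true_and, zero_add]
    exact fun hc => h hc.symm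

lemma Acount_border (p : ℕ) [NeZero p] (i1 i2 n1 n2 : ℕ) (i : ZMod p) (h : p ≤ n1 + n2) :
    Acount p i1 i2 n1 n2 i = 0 := by
  classical
  unfold Acount
  rw [Finset.card_eq_zero, Finset.filter_eq_empty_iff]
  rintro ⟨X1, X2⟩ hmem
  simp only [Finset.mem_product, Finset.mem_powersetCard] at hmem
  obtain ⟨⟨hs1, hc1⟩, hs2, hc2⟩ := hmem
  rintro ⟨hdisj, -⟩
  have hd : Disjoint X1 X2 := Finset.disjoint_iff_inter_eq_empty.mpr hdisj
  have hcard : (X1 ∪ X2).card = n1 + n2 := by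
    rw [Finset.card_union_of_disjoint hd, hc1, hc2]
  have hsub : X1 ∪ X2 ⊆ Finset.univ.erase (0 : ZMod p) :=
    Finset.union_subset hs1 hs2
  have := Finset.card_le_card hsub
  rw [Finset.card_erase_of_mem (Finset.mem_univ _), Finset.card_univ, ZMod.card] at this
  have hp0 : p ≠ 0 := NeZero.ne p
  omega

lemma card_part1 (p : ℕ) [NeZero p] (i1 i2 n1 n2 : ℕ) (i : ZMod p) :
    ((Bset p i1 i2 n1 n2 i).filter
      (fun X => (0 : ZMod p) ∉ X.1 ∧ (0 : ZMod p) ∉ X.2)).card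
      = (Aset p i1 i2 n1 n2 i).card := by
  congr 1
  ext X
  simp only [Finset.mem_filter, mem_Bset, mem_Aset]
  tauto

lemma card_part2 (p : ℕ) [NeZero p] (i1 i2 n1 n2 : ℕ) (i : ZMod p) (hn1 : n1 ≠ 0) :
    ((Bset p i1 i2 n1 n2 i).filter (fun X => (0 : ZMod p) ∈ X.1)).card
      = (Aset p i1 i2 (n1 - 1) n2 i).card := by
  classical
  apply Finset.card_bij (fun X _ => (X.1.erase 0, X.2))
  · rintro ⟨X1, X2⟩ hX
    simp only [Finset.mem_filter, mem_Bset] at hX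
    obtain ⟨⟨hc1, hc2, hdisj, hsum⟩, h0⟩ := hX
    have h0X2 : (0 : ZMod p) ∉ X2 := by
      intro h2
      have : (0 : ZMod p) ∈ X1 ∩ X2 := Finset.mem_inter.mpr ⟨h0, h2⟩
      rw [hdisj] at this
      exact Finset.notMem_empty _ this
    rw [mem_Aset]
    refine ⟨⟨Finset.notMem_erase _ _, ?_⟩, ⟨h0X2, hc2⟩, ?_, ?_⟩
    · rw [Finset.card_erase_of_mem h0, hc1]
    · apply Finset.eq_empty_of_forall_notMem
      intro x hx
      rw [Finset.mem_inter, Finset.mem_erase] at hx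
      have : x ∈ X1 ∩ X2 := Finset.mem_inter.mpr ⟨hx.1.2, hx.2⟩
      rw [hdisj] at this
      exact Finset.notMem_empty _ this
    · have : (X1.erase 0).sum id = X1.sum id := Finset.sum_erase _ rfl
      rw [this]
      exact hsum
  · rintro ⟨X1, X2⟩ hX ⟨Y1, Y2⟩ hY h
    simp only [Finset.mem_filter, mem_Bset] at hX hY
    simp only [Prod.mk.injEq] at h
    have h1 : X1 = Y1 := by
      rw [← Finset.insert_erase hX.2, ← Finset.insert_erase hY.2, h.1]
    exact Prod.ext h1 h.2
  · rintro ⟨Y1, Y2⟩ hY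
    rw [mem_Aset] at hY
    obtain ⟨⟨h01, hc1⟩, ⟨h02, hc2⟩, hdisj, hsum⟩ := hY
    refine ⟨(insert 0 Y1, Y2), ?_, ?_⟩
    · simp only [Finset.mem_filter, mem_Bset]
      refine ⟨⟨?_, hc2, ?_, ?_⟩, Finset.mem_insert_self _ _⟩
      · rw [Finset.card_insert_of_notMem h01, hc1]
        omega
      · apply Finset.eq_empty_of_forall_notMem
        intro x hx
        rw [Finset.mem_inter, Finset.mem_insert] at hx
        rcases hx.1 with rfl | hx1
        · exact h02 hx.2
        · have : x ∈ Y1 ∩ Y2 := Finset.mem_inter.mpr ⟨hx1, hx.2⟩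
          rw [hdisj] at this
          exact Finset.notMem_empty _ this
      · rw [Finset.sum_insert h01]
        simpa using hsum
    · simp only [Prod.mk.injEq]
      exact ⟨Finset.erase_insert h01, trivial⟩

lemma card_part3 (p : ℕ) [NeZero p] (i1 i2 n1 n2 : ℕ) (i : ZMod p) (hn2 : n2 ≠ 0) :
    ((Bset p i1 i2 n1 n2 i).filter (fun X => (0 : ZMod p) ∈ X.2)).card
      = (Aset p i1 i2 n1 (n2 - 1) i).card := by
  classical
  apply Finset.card_bij (fun X _ => (X.1, X.2.erase 0))
  · rintro ⟨X1, X2⟩ hX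
    simp only [Finset.mem_filter, mem_Bset] at hX
    obtain ⟨⟨hc1, hc2, hdisj, hsum⟩, h0⟩ := hX
    have h0X1 : (0 : ZMod p) ∉ X1 := by
      intro h2
      have : (0 : ZMod p) ∈ X1 ∩ X2 := Finset.mem_inter.mpr ⟨h2, h0⟩
      rw [hdisj] at this
      exact Finset.notMem_empty _ this
    rw [mem_Aset]
    refine ⟨⟨h0X1, hc1⟩, ⟨Finset.notMem_erase _ _, ?_⟩, ?_, ?_⟩
    · rw [Finset.card_erase_of_mem h0, hc2]
    · apply Finset.eq_empty_of_forall_notMem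
      intro x hx
      rw [Finset.mem_inter, Finset.mem_erase] at hx
      have : x ∈ X1 ∩ X2 := Finset.mem_inter.mpr ⟨hx.1, hx.2.2⟩
      rw [hdisj] at this
      exact Finset.notMem_empty _ this
    · have : (X2.erase 0).sum id = X2.sum id := Finset.sum_erase _ rfl
      rw [this]
      exact hsum
  · rintro ⟨X1, X2⟩ hX ⟨Y1, Y2⟩ hY h
    simp only [Finset.mem_filter, mem_Bset] at hX hY
    simp only [Prod.mk.injEq] at h
    have h2 : X2 = Y2 := by
      rw [← Finset.insert_erase hX.2, ← Finset.insert_erase hY.2, h.2]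
    exact Prod.ext h.1 h2
  · rintro ⟨Y1, Y2⟩ hY
    rw [mem_Aset] at hY
    obtain ⟨⟨h01, hc1⟩, ⟨h02, hc2⟩, hdisj, hsum⟩ := hY
    refine ⟨(Y1, insert 0 Y2), ?_, ?_⟩
    · simp only [Finset.mem_filter, mem_Bset]
      refine ⟨⟨hc1, ?_, ?_, ?_⟩, Finset.mem_insert_self _ _⟩
      · rw [Finset.card_insert_of_notMem h02, hc2]
        omega
      · apply Finset.eq_empty_of_forall_notMem
        intro x hx
        rw [Finset.mem_inter, Finset.mem_insert] at hx
        rcases hx.2 with rfl | hx2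
        · exact h01 hx.1
        · have : x ∈ Y1 ∩ Y2 := Finset.mem_inter.mpr ⟨hx.1, hx2⟩
          rw [hdisj] at this
          exact Finset.notMem_empty _ this
      · rw [Finset.sum_insert h02]
        simpa using hsum
    · simp only [Prod.mk.injEq]
      exact ⟨trivial, Finset.erase_insert h02⟩

lemma Bset_three (p : ℕ) [NeZero p] (i1 i2 n1 n2 : ℕ) (i : ZMod p) :
    (Bset p i1 i2 n1 n2 i).card =
      ((Bset p i1 i2 n1 n2 i).filter
        (fun X => (0 : ZMod p) ∉ X.1 ∧ (0 : ZMod p) ∉ X.2)).card +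
      ((Bset p i1 i2 n1 n2 i).filter (fun X => (0 : ZMod p) ∈ X.1)).card +
      ((Bset p i1 i2 n1 n2 i).filter (fun X => (0 : ZMod p) ∈ X.2)).card := by
  classical
  set S := Bset p i1 i2 n1 n2 i with hS
  have h1 : (S.filter (fun X => (0 : ZMod p) ∈ X.1)).card +
      (S.filter (fun X => ¬ (0 : ZMod p) ∈ X.1)).card = S.card :=
    Finset.card_filter_add_card_filter_not _
  have h2 : ((S.filter (fun X => ¬ (0 : ZMod p) ∈ X.1)).filter
        (fun X => (0 : ZMod p) ∈ X.2)).card +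
      ((S.filter (fun X => ¬ (0 : ZMod p) ∈ X.1)).filter
        (fun X => ¬ (0 : ZMod p) ∈ X.2)).card
      = (S.filter (fun X => ¬ (0 : ZMod p) ∈ X.1)).card :=
    Finset.card_filter_add_card_filter_not _
  have e1 : (S.filter (fun X => ¬ (0 : ZMod p) ∈ X.1)).filter
      (fun X => (0 : ZMod p) ∈ X.2) = S.filter (fun X => (0 : ZMod p) ∈ X.2) := by
    ext X
    simp only [Finset.mem_filter]
    constructor
    · tauto
    · rintro ⟨hXS, h02⟩
      refine ⟨⟨hXS, ?_⟩, h02⟩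
      intro h01
      have hd := (mem_Bset p).mp hXS
      have : (0 : ZMod p) ∈ X.1 ∩ X.2 := Finset.mem_inter.mpr ⟨h01, h02⟩
      rw [hd.2.2.1] at this
      exact Finset.notMem_empty _ this
  have e2 : (S.filter (fun X => ¬ (0 : ZMod p) ∈ X.1)).filter
      (fun X => ¬ (0 : ZMod p) ∈ X.2)
      = S.filter (fun X => (0 : ZMod p) ∉ X.1 ∧ (0 : ZMod p) ∉ X.2) := by
    ext X
    simp only [Finset.mem_filter]
    tauto
  rw [e1, e2] at h2
  omega

lemma shift_mem (p : ℕ) [NeZero p] {i1 i2 n1 n2 : ℕ} {i : ZMod p} (u : ZMod p)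
    {X : Finset (ZMod p) × Finset (ZMod p)} (hX : X ∈ Bset p i1 i2 n1 n2 i) :
    (X.1.image (· + u), X.2.image (· + u)) ∈
      Bset p i1 i2 n1 n2 (i + u * ((n1 : ZMod p) * i1 + (n2 : ZMod p) * i2)) := by
  classical
  rw [mem_Bset] at hX ⊢
  obtain ⟨hc1, hc2, hdisj, hsum⟩ := hX
  have hinj : Function.Injective (· + u) := add_left_injective u
  have hsum1 : (X.1.image (· + u)).sum id = X.1.sum id + (n1 : ZMod p) * u := by
    rw [Finset.sum_image (fun x _ y _ h => hinj h)]
    simp only [id]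
    rw [Finset.sum_add_distrib, Finset.sum_const, hc1, nsmul_eq_mul]
  have hsum2 : (X.2.image (· + u)).sum id = X.2.sum id + (n2 : ZMod p) * u := by
    rw [Finset.sum_image (fun x _ y _ h => hinj h)]
    simp only [id]
    rw [Finset.sum_add_distrib, Finset.sum_const, hc2, nsmul_eq_mul]
  refine ⟨?_, ?_, ?_, ?_⟩
  · rw [Finset.card_image_of_injective _ hinj, hc1]
  · rw [Finset.card_image_of_injective _ hinj, hc2]
  · rw [← Finset.image_inter _ _ hinj, hdisj, Finset.image_empty]
  · rw [hsum1, hsum2, ← hsum]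
    ring

lemma Bset_shift_card (p : ℕ) [NeZero p] (i1 i2 n1 n2 : ℕ) (i u : ZMod p) :
    (Bset p i1 i2 n1 n2 i).card =
      (Bset p i1 i2 n1 n2 (i + u * ((n1 : ZMod p) * i1 + (n2 : ZMod p) * i2))).card := by
  classical
  set g : ZMod p := (n1 : ZMod p) * i1 + (n2 : ZMod p) * i2 with hg
  refine Finset.card_bij' (fun X _ => (X.1.image (· + u), X.2.image (· + u)))
    (fun Y _ => (Y.1.image (· + (-u)), Y.2.image (· + (-u)))) ?_ ?_ ?_ ?_
  · intro X hX
    exact shift_mem p u hX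
  · intro Y hY
    have := shift_mem p (-u) hY
    have he : i + u * g + -u * g = i := by ring
    rwa [he] at this
  · intro X hX
    simp only [Finset.image_image]
    have h1 : ((fun x => x + -u) ∘ fun x => x + u) = id := by funext x; simp
    rw [h1, Finset.image_id, Finset.image_id]
  · intro Y hY
    simp only [Finset.image_image]
    have h2 : ((fun x => x + u) ∘ fun x => x + -u) = id := by funext x; simp
    rw [h2, Finset.image_id, Finset.image_id]

lemma Bset_split (p : ℕ) [NeZero p] (i1 i2 n1 n2 : ℕ) (i : ZMod p) :
    (Bset p i1 i2 n1 n2 i).card =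
      (Aset p i1 i2 n1 n2 i).card
      + (if n1 = 0 then 0 else (Aset p i1 i2 (n1 - 1) n2 i).card)
      + (if n2 = 0 then 0 else (Aset p i1 i2 n1 (n2 - 1) i).card) := by
  classical
  rw [Bset_three, card_part1]
  congr 1
  · congr 1
    split_ifs with h
    · subst h
      rw [Finset.card_eq_zero, Finset.filter_eq_empty_iff]
      intro X hX
      have := (mem_Bset p).mp hX
      have h1 : X.1 = ∅ := Finset.card_eq_zero.mp this.1
      rw [h1]
      exact Finset.notMem_empty _
    · exact card_part2 p i1 i2 n1 n2 i h
  · split_ifs with h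
    · subst h
      rw [Finset.card_eq_zero, Finset.filter_eq_empty_iff]
      intro X hX
      have := (mem_Bset p).mp hX
      have h1 : X.2 = ∅ := Finset.card_eq_zero.mp this.2.1
      rw [h1]
      exact Finset.notMem_empty _
    · exact card_part3 p i1 i2 n1 n2 i h

lemma Delta_rec (p : ℕ) [NeZero p] (hp : p.Prime) (i1 i2 n1 n2 : ℕ)
    (hgz : ((n1 : ZMod p) * i1 + (n2 : ZMod p) * i2) ≠ 0) :
    Delta p i1 i2 n1 n2
      + (if n1 = 0 then 0 else Delta p i1 i2 (n1 - 1) n2)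
      + (if n2 = 0 then 0 else Delta p i1 i2 n1 (n2 - 1)) = 0 := by
  classical
  haveI : Fact p.Prime := ⟨hp⟩
  set g : ZMod p := (n1 : ZMod p) * i1 + (n2 : ZMod p) * i2 with hg
  have key : (Bset p i1 i2 n1 n2 (0 : ZMod p)).card
      = (Bset p i1 i2 n1 n2 (1 : ZMod p)).card := by
    have := Bset_shift_card p i1 i2 n1 n2 0 g⁻¹
    rw [← hg, zero_add, inv_mul_cancel₀ hgz] at this
    exact this
  have s0 := Bset_split p i1 i2 n1 n2 0
  have s1 := Bset_split p i1 i2 n1 n2 1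
  rw [s0, s1] at key
  simp only [Delta, Acount_eq]
  split_ifs at key ⊢ with h1 h2 <;> push_cast <;> omega

/- ### Uniqueness machinery -/

def aIdx (p : ℕ) [NeZero p] (c : ZMod p) (t : ℕ) : ℕ := ((t : ZMod p) * c).val

def wfun (p : ℕ) [NeZero p] (c : ZMod p) (s t j : ℕ) : ℤ :=
  if aIdx p c t ≤ j then ((s - t).choose (j - aIdx p c t) : ℤ) else 0

def eps (p : ℕ) [NeZero p] (c : ZMod p) (f : ℕ → ℕ → ℤ) (t : ℕ) : ℤ :=
  if aIdx p c t ≤ t ∧ 1 ≤ t then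
    f (aIdx p c t) (t - aIdx p c t)
      - (if aIdx p c t = 0 then 0 else f (aIdx p c t - 1) (t - aIdx p c t))
      - (if t - aIdx p c t = 0 then 0 else f (aIdx p c t) (t - aIdx p c t - 1))
  else 0

lemma aIdx_lt' (p : ℕ) [NeZero p] (c : ZMod p) (t : ℕ) : aIdx p c t < p := ZMod.val_lt _

lemma aIdx_cast' (p : ℕ) [NeZero p] (c : ZMod p) (t : ℕ) :
    ((aIdx p c t : ℕ) : ZMod p) = (t : ZMod p) * c := by
  simp [aIdx, ZMod.natCast_val, ZMod.cast_id]

lemma wfun_pascal' (p : ℕ) [NeZero p] (c : ZMod p) (s t j : ℕ) (ht : t ≤ s) :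
    wfun p c (s+1) t j = (if j = 0 then 0 else wfun p c s t (j-1)) + wfun p c s t j := by
  unfold wfun
  rcases Nat.eq_zero_or_pos j with rfl | hj
  · by_cases h : aIdx p c t = 0 <;> simp [Nat.le_zero, h]
  · rw [if_neg (by omega : ¬ j = 0)]
    by_cases h1 : aIdx p c t ≤ j - 1
    · rw [if_pos h1, if_pos (by omega : aIdx p c t ≤ j), if_pos (by omega : aIdx p c t ≤ j)]
      have e1 : s + 1 - t = (s - t) + 1 := by omega
      have e2 : j - aIdx p c t = (j - 1 - aIdx p c t) + 1 := by omega
      rw [e1, e2, Nat.choose_succ_succ]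
      push_cast
      ring
    · by_cases h2 : aIdx p c t = j
      · rw [if_neg h1, if_pos (le_of_eq h2), if_pos (le_of_eq h2), h2]
        simp
      · rw [if_neg h1, if_neg (by omega : ¬ aIdx p c t ≤ j), if_neg (by omega : ¬ aIdx p c t ≤ j)]
        simp
lemma key' (p : ℕ) [NeZero p] (c : ZMod p) (f : ℕ → ℕ → ℤ)
    (hf0 : f 0 0 = 0)
    (hfrec : ∀ a b : ℕ, ¬ ((a : ZMod p) = ((a + b : ℕ) : ZMod p) * c) →
      f a b = (if a = 0 then 0 else f (a-1) b) + (if b = 0 then 0 else f a (b-1))) :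
    ∀ s, s ≤ p - 1 → ∀ j, j ≤ s →
      f j (s - j) = ∑ t ∈ Finset.Icc 1 s, eps p c f t * wfun p c s t j := by
  intro s
  induction s with
  | zero =>
    intro _ j hj
    interval_cases j
    simpa using hf0
  | succ s ih =>
    intro hs1 j hj
    have hsle : s ≤ p - 1 := by omega
    have hp0 : p ≠ 0 := NeZero.ne p
    rw [Finset.sum_Icc_succ_top (by omega : 1 ≤ s + 1)]
    set a := aIdx p c (s+1) with ha
    have hap : a < p := aIdx_lt' p c (s+1)
    have hjp : j < p := by omega
    have hlast : wfun p c (s+1) (s+1) j = if j = a then 1 else 0 := by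
      unfold wfun
      rw [← ha, Nat.sub_self]
      by_cases h1 : j = a
      · rw [if_pos h1, if_pos (le_of_eq h1.symm), h1, Nat.sub_self]
        simp
      · rw [if_neg h1]
        by_cases h2 : a ≤ j
        · rw [if_pos h2]
          have hne : j - a ≠ 0 := by omega
          rcases Nat.exists_eq_succ_of_ne_zero hne with ⟨k, hk⟩
          rw [hk]
          simp
        · rw [if_neg h2]
    have hsplit : ∑ t ∈ Finset.Icc 1 s, eps p c f t * wfun p c (s+1) t j
        = (if j = 0 then 0 else ∑ t ∈ Finset.Icc 1 s, eps p c f t * wfun p c s t (j-1))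
          + ∑ t ∈ Finset.Icc 1 s, eps p c f t * wfun p c s t j := by
      by_cases hj0 : j = 0
      · subst hj0
        rw [if_pos rfl, zero_add]
        apply Finset.sum_congr rfl
        intro t ht
        rw [Finset.mem_Icc] at ht
        rw [wfun_pascal' p c s t 0 ht.2, if_pos rfl, zero_add]
      · rw [if_neg hj0, ← Finset.sum_add_distrib]
        apply Finset.sum_congr rfl
        intro t ht
        rw [Finset.mem_Icc] at ht
        rw [wfun_pascal' p c s t j ht.2, if_neg hj0]
        ring
    rw [hsplit, hlast]
    have hSz : j = s + 1 → ∑ t ∈ Finset.Icc 1 s, eps p c f t * wfun p c s t j = 0 := by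
      intro hjs
      apply Finset.sum_eq_zero
      intro t ht
      rw [Finset.mem_Icc] at ht
      by_cases he : eps p c f t = 0
      · rw [he, zero_mul]
      · have hat : aIdx p c t ≤ t := by
          by_contra hcon
          apply he
          unfold eps
          rw [if_neg (by tauto)]
        unfold wfun
        by_cases hle : aIdx p c t ≤ j
        · rw [if_pos hle]
          have hlt : s - t < j - aIdx p c t := by omega
          rw [Nat.choose_eq_zero_of_lt hlt]
          simp
        · rw [if_neg hle, mul_zero]
    have hexc_iff : ((j : ZMod p) = ((j + (s + 1 - j) : ℕ) : ZMod p) * c) ↔ j = a := by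
      rw [show j + (s + 1 - j) = s + 1 by omega]
      constructor
      · intro h
        rw [← aIdx_cast' p c (s+1)] at h
        have v1 := ZMod.val_cast_of_lt hjp
        have v2 := ZMod.val_cast_of_lt (aIdx_lt' p c (s+1))
        rw [h] at v1
        rw [ha]
        omega
      · intro h
        rw [h, ha, aIdx_cast' p c (s+1)]
    by_cases hex : j = a
    · rw [if_pos hex, mul_one]
      have heps : eps p c f (s+1) = f a (s+1-a)
          - (if a = 0 then 0 else f (a-1) (s+1-a))
          - (if s+1-a = 0 then 0 else f a (s+1-a-1)) := by
        unfold eps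
        rw [← ha, if_pos ⟨by omega, by omega⟩]
      rw [← hex] at heps
      by_cases hj0 : j = 0
      · subst hj0
        rw [if_pos rfl]
        rw [if_neg (by omega : ¬ s + 1 - 0 = 0)] at heps
        have hih := ih hsle 0 (by omega)
        simp only [Nat.sub_zero] at heps hih ⊢
        rw [← hih]
        have : s + 1 - 1 = s := by omega
        rw [this] at heps
        simp only [if_true] at heps
        linarith
      · rw [if_neg hj0] at heps ⊢
        have hih1 := ih hsle (j-1) (by omega)
        have e1 : s - (j - 1) = s + 1 - j := by omega
        rw [e1] at hih1
        rw [← hih1]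
        by_cases hjs : j = s + 1
        · rw [hSz hjs]
          rw [if_pos (by omega : s + 1 - j = 0)] at heps
          rw [show s + 1 - j = 0 by omega] at heps ⊢
          linarith
        · have hih2 := ih hsle j (by omega)
          rw [← hih2]
          rw [if_neg (by omega : ¬ s + 1 - j = 0)] at heps
          have e2 : s - j = s + 1 - j - 1 := by omega
          rw [e2]
          linarith
    · rw [if_neg hex, mul_zero, add_zero]
      have hrec := hfrec j (s + 1 - j) (fun h => hex (hexc_iff.mp h))
      by_cases hj0 : j = 0
      · subst hj0
        rw [if_pos rfl] at hrec ⊢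
        rw [if_neg (by omega : ¬ s + 1 - 0 = 0)] at hrec
        have hih := ih hsle 0 (by omega)
        simp only [Nat.sub_zero] at hrec hih ⊢
        rw [← hih]
        rw [show s + 1 - 1 = s by omega] at hrec
        linarith
      · rw [if_neg hj0] at hrec ⊢
        have hih1 := ih hsle (j-1) (by omega)
        rw [show s - (j - 1) = s + 1 - j by omega] at hih1
        rw [← hih1]
        by_cases hjs : j = s + 1
        · rw [hSz hjs]
          rw [if_pos (by omega : s + 1 - j = 0)] at hrec
          rw [show s + 1 - j = 0 by omega] at hrec ⊢
          linarith
        · have hih2 := ih hsle j (by omega)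
          rw [← hih2]
          rw [if_neg (by omega : ¬ s + 1 - j = 0)] at hrec
          rw [show s - j = s + 1 - j - 1 by omega]
          linarith
lemma natCast_ne_zero_of_between (p t : ℕ) [NeZero p] (h1 : 1 ≤ t) (h2 : t ≤ p - 1) :
    (t : ZMod p) ≠ 0 := by
  intro h
  have hp0 : p ≠ 0 := NeZero.ne p
  have := ZMod.val_cast_of_lt (show t < p by omega)
  rw [h] at this
  simp [ZMod.val_zero] at this
  omega

lemma master (p : ℕ) [NeZero p] (c : ZMod p) (f : ℕ → ℕ → ℤ)
    (hf0 : f 0 0 = 0)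
    (htop : ∀ a b : ℕ, p ≤ a + b → f a b = 0)
    (hfrec : ∀ a b : ℕ, ¬ ((a : ZMod p) = ((a + b : ℕ) : ZMod p) * c) →
      f a b = (if a = 0 then 0 else f (a-1) b) + (if b = 0 then 0 else f a (b-1))) :
    ∀ j, 1 ≤ j → j ≤ p - 1 →
      ∑ t ∈ Finset.Icc 1 (p-1), eps p c f t * wfun p c p t j = 0 := by
  intro j hj1 hj2
  have hp0 : p ≠ 0 := NeZero.ne p
  have hrec := hfrec j (p - j) (by
    rw [show j + (p - j) = p by omega, ZMod.natCast_self, zero_mul]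
    exact natCast_ne_zero_of_between p j hj1 hj2)
  rw [htop j (p - j) (by omega)] at hrec
  rw [if_neg (by omega : ¬ j = 0), if_neg (by omega : ¬ p - j = 0)] at hrec
  have k1 := key' p c f hf0 hfrec (p-1) (le_refl _) (j-1) (by omega)
  have k2 := key' p c f hf0 hfrec (p-1) (le_refl _) j (by omega)
  rw [show p - 1 - (j - 1) = p - j by omega] at k1
  rw [show p - 1 - j = p - j - 1 by omega] at k2
  have hsum : ∑ t ∈ Finset.Icc 1 (p-1), eps p c f t * wfun p c p t j
      = ∑ t ∈ Finset.Icc 1 (p-1),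
          (eps p c f t * wfun p c (p-1) t (j-1) + eps p c f t * wfun p c (p-1) t j) := by
    apply Finset.sum_congr rfl
    intro t ht
    rw [Finset.mem_Icc] at ht
    have := wfun_pascal' p c (p-1) t j ht.2
    rw [show p - 1 + 1 = p by omega] at this
    rw [this, if_neg (by omega : ¬ j = 0)]
    ring
  rw [hsum, Finset.sum_add_distrib, ← k1, ← k2]
  linarith

lemma eps_all_zero (p : ℕ) [NeZero p] (hp : p.Prime) (c : ZMod p) (hc1 : c ≠ 1)
    (f : ℕ → ℕ → ℤ)
    (hf0 : f 0 0 = 0)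
    (htop : ∀ a b : ℕ, p ≤ a + b → f a b = 0)
    (hfrec : ∀ a b : ℕ, ¬ ((a : ZMod p) = ((a + b : ℕ) : ZMod p) * c) →
      f a b = (if a = 0 then 0 else f (a-1) b) + (if b = 0 then 0 else f a (b-1))) :
    ∀ t, 1 ≤ t → t ≤ p - 1 → eps p c f t = 0 := by
  haveI : Fact p.Prime := ⟨hp⟩
  intro t ht1 ht2
  by_contra hne
  have hT : ((Finset.Icc 1 (p-1)).filter (fun t => eps p c f t ≠ 0)).Nonempty := by
    refine ⟨t, ?_⟩
    rw [Finset.mem_filter, Finset.mem_Icc]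
    exact ⟨⟨ht1, ht2⟩, hne⟩
  obtain ⟨t0, ht0T, hmax⟩ := Finset.exists_max_image _ (fun t => aIdx p c t + (p - t)) hT
  rw [Finset.mem_filter, Finset.mem_Icc] at ht0T
  obtain ⟨⟨ht01, ht02⟩, hne0⟩ := ht0T
  have hp0 : p ≠ 0 := NeZero.ne p
  have hat0 : aIdx p c t0 ≤ t0 := by
    by_contra hcon
    apply hne0
    unfold eps
    rw [if_neg (by tauto)]
  have hane : aIdx p c t0 ≠ t0 := by
    intro h
    apply hc1
    have hcast := aIdx_cast' p c t0
    rw [h] at hcast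
    have ht0nz : (t0 : ZMod p) ≠ 0 := natCast_ne_zero_of_between p t0 ht01 ht02
    have : (t0 : ZMod p) * 1 = (t0 : ZMod p) * c := by rw [mul_one]; exact hcast
    exact (mul_left_cancel₀ ht0nz this).symm
  set j0 := aIdx p c t0 + (p - t0) with hj0
  have hj01 : 1 ≤ j0 := by omega
  have hj02 : j0 ≤ p - 1 := by omega
  have hm := master p c f hf0 htop hfrec j0 hj01 hj02
  rw [Finset.sum_eq_single_of_mem t0 (by rw [Finset.mem_Icc]; exact ⟨ht01, ht02⟩)] at hm
  · apply hne0
    have hw : wfun p c p t0 j0 = 1 := by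
      unfold wfun
      rw [if_pos (by omega : aIdx p c t0 ≤ j0)]
      rw [show j0 - aIdx p c t0 = p - t0 by omega, Nat.choose_self]
      norm_num
    rw [hw, mul_one] at hm
    exact hm
  · intro b hb hbne
    rw [Finset.mem_Icc] at hb
    by_cases he : eps p c f b = 0
    · rw [he, zero_mul]
    · have hab : aIdx p c b ≤ b := by
        by_contra hcon
        apply he
        unfold eps
        rw [if_neg (by tauto)]
      have hDle : aIdx p c b + (p - b) ≤ j0 := hmax b (by
        rw [Finset.mem_filter, Finset.mem_Icc]; exact ⟨⟨hb.1, hb.2⟩, he⟩)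
      have hDne : aIdx p c b + (p - b) ≠ j0 := by
        intro h
        apply hbne
        have heq : aIdx p c b + t0 = aIdx p c t0 + b := by omega
        have hcast : ((aIdx p c b + t0 : ℕ) : ZMod p) = ((aIdx p c t0 + b : ℕ) : ZMod p) := by
          rw [heq]
        push_cast at hcast
        rw [aIdx_cast' p c b, aIdx_cast' p c t0] at hcast
        have hfac : ((b : ZMod p) - (t0 : ZMod p)) * (c - 1) = 0 := by ring_nf; linear_combination hcast
        rcases mul_eq_zero.mp hfac with h1 | h2
        · have : (b : ZMod p) = (t0 : ZMod p) := by linear_combination h1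
          have v1 := ZMod.val_cast_of_lt (show b < p by omega)
          have v2 := ZMod.val_cast_of_lt (show t0 < p by omega)
          rw [this] at v1
          omega
        · exact absurd (by linear_combination h2) hc1
      have hwz : wfun p c p b j0 = 0 := by
        unfold wfun
        by_cases hle : aIdx p c b ≤ j0
        · rw [if_pos hle, Nat.choose_eq_zero_of_lt (by omega : p - b < j0 - aIdx p c b)]
          norm_num
        · rw [if_neg hle]
      rw [hwz, mul_zero]

lemma uniq (p : ℕ) [NeZero p] (hp : p.Prime) (c : ZMod p) (hc1 : c ≠ 1)
    (f : ℕ → ℕ → ℤ) (hf0 : f 0 0 = 0)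
    (htop : ∀ a b : ℕ, p ≤ a + b → f a b = 0)
    (hfrec : ∀ a b : ℕ, ¬ ((a : ZMod p) = ((a + b : ℕ) : ZMod p) * c) →
      f a b = (if a = 0 then 0 else f (a-1) b) + (if b = 0 then 0 else f a (b-1))) :
    ∀ a b : ℕ, a + b ≤ p - 1 → f a b = 0 := by
  intro a b hab
  have hk := key' p c f hf0 hfrec (a+b) hab a (by omega)
  rw [show a + b - a = b by omega] at hk
  rw [hk]
  apply Finset.sum_eq_zero
  intro t ht
  rw [Finset.mem_Icc] at ht
  rw [eps_all_zero p hp c hc1 f hf0 htop hfrec t ht.1 (by omega), zero_mul]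

/- ### Main theorem -/

/-- The Pascal-type functional relation, together with the border
values, characterizes the function `Δ^{i1,i2}(·,·,p)`. -/
theorem rarefaction_stmt13 (p : ℕ) [NeZero p] (hp : p.Prime) (hodd : Odd p)
    (i1 i2 : ℕ) (hi1 : 1 ≤ i1 ∧ i1 ≤ p - 1) (hi2 : 1 ≤ i2 ∧ i2 ≤ p - 1) (hne : i1 ≠ i2)
    (d : ℤ → ℤ → ℤ)
    (h00 : d 0 0 = 1)
    (hborder : ∀ n1 n2 : ℤ, -1 ≤ n1 → -1 ≤ n2 →
      (n1 = -1 ∨ n2 = -1 ∨ (p : ℤ) ≤ n1 + n2) → d n1 n2 = 0)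
    (hrec : ∀ n1 n2 : ℤ, 0 ≤ n1 → 0 ≤ n2 → ¬ ((p : ℤ) ∣ n1 * i1 + n2 * i2) →
      d n1 n2 + d (n1 - 1) n2 + d n1 (n2 - 1) = 0) :
    ∀ n1 n2 : ℕ, n1 + n2 ≤ p - 1 → d n1 n2 = Delta p i1 i2 n1 n2 := by
  classical
  haveI : Fact p.Prime := ⟨hp⟩
  have hp2 : 2 ≤ p := hp.two_le
  have hp0 : p ≠ 0 := NeZero.ne p
  have hI1 : (i1 : ZMod p) ≠ 0 := natCast_ne_zero_of_between p i1 hi1.1 hi1.2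
  have hI2 : (i2 : ZMod p) ≠ 0 := natCast_ne_zero_of_between p i2 hi2.1 hi2.2
  have hdnz : (i2 : ZMod p) - (i1 : ZMod p) ≠ 0 := by
    intro h
    have h2 : (i2 : ZMod p) = (i1 : ZMod p) := by linear_combination h
    have v1 := ZMod.val_cast_of_lt (show i1 < p by omega)
    have v2 := ZMod.val_cast_of_lt (show i2 < p by omega)
    rw [h2] at v2
    omega
  set c : ZMod p := (i2 : ZMod p) / ((i2 : ZMod p) - (i1 : ZMod p)) with hc
  have hc1 : c ≠ 1 := by
    intro h
    rw [hc, div_eq_one_iff_eq hdnz] at h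
    apply hI1
    linear_combination h
  have hexc : ∀ a b : ℕ, ((a : ZMod p) = ((a + b : ℕ) : ZMod p) * c) ↔
      ((a : ZMod p) * i1 + (b : ZMod p) * i2 = 0) := by
    intro a b
    push_cast
    rw [hc, ← mul_div_assoc, eq_div_iff hdnz]
    constructor
    · intro h
      linear_combination -h
    · intro h
      linear_combination -h
  -- Delta facts
  have hD00 : Delta p i1 i2 0 0 = 1 := by
    unfold Delta
    rw [Acount_zero_zero p i1 i2 0, Acount_zero_zero p i1 i2 1, if_pos rfl,
      if_neg (one_ne_zero : (1 : ZMod p) ≠ 0)]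
    norm_num
  have hDtop : ∀ a b : ℕ, p ≤ a + b → Delta p i1 i2 a b = 0 := by
    intro a b hab
    unfold Delta
    rw [Acount_border p i1 i2 a b 0 hab, Acount_border p i1 i2 a b 1 hab]
    norm_num
  -- the difference function, with sign
  set E : ℕ → ℕ → ℤ := fun a b => d a b - Delta p i1 i2 a b with hE
  set f : ℕ → ℕ → ℤ := fun a b => (-1 : ℤ)^(a+b) * E a b with hf
  have hf0 : f 0 0 = 0 := by
    simp only [hf, hE, pow_zero, one_mul, Nat.add_zero, Nat.cast_zero, h00, hD00]
    norm_num
  have htop : ∀ a b : ℕ, p ≤ a + b → f a b = 0 := by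
    intro a b hab
    have hd0 : d a b = 0 := by
      apply hborder a b (by omega) (by omega)
      right; right
      push_cast
      omega
    simp only [hf, hE, hd0, hDtop a b hab]
    ring
  have hfrec : ∀ a b : ℕ, ¬ ((a : ZMod p) = ((a + b : ℕ) : ZMod p) * c) →
      f a b = (if a = 0 then 0 else f (a-1) b) + (if b = 0 then 0 else f a (b-1)) := by
    intro a b hex
    have hgz : ((a : ZMod p) * i1 + (b : ZMod p) * i2) ≠ 0 := fun h => hex ((hexc a b).mpr h)
    have hdvd : ¬ ((p : ℤ) ∣ ((a : ℤ) * i1 + (b : ℤ) * i2)) := by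
      intro hdv
      apply hgz
      have := (ZMod.intCast_zmod_eq_zero_iff_dvd _ p).mpr hdv
      push_cast at this
      exact this
    have hDr := Delta_rec p hp i1 i2 a b hgz
    have hdr : d a b + (if a = 0 then 0 else d ((a - 1 : ℕ) : ℤ) b)
        + (if b = 0 then 0 else d a ((b - 1 : ℕ) : ℤ)) = 0 := by
      have h0 := hrec a b (by omega) (by omega) hdvd
      by_cases ha : a = 0
      · subst ha
        by_cases hb : b = 0
        · exact absurd (by simp [hb]) hdvd
        · rw [if_pos rfl, if_neg hb]
          have e1 : ((0 : ℕ) : ℤ) - 1 = -1 := by norm_num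
          rw [e1] at h0
          rw [hborder (-1) b (by norm_num) (by omega) (Or.inl rfl)] at h0
          have e2 : ((b : ℤ) - 1) = ((b - 1 : ℕ) : ℤ) := by
            have : 1 ≤ b := by omega
            push_cast [this]
            ring
          rw [e2] at h0
          linarith
      · by_cases hb : b = 0
        · subst hb
          rw [if_neg ha, if_pos rfl]
          have e1 : ((0 : ℕ) : ℤ) - 1 = -1 := by norm_num
          rw [e1] at h0
          rw [hborder a (-1) (by omega) (by norm_num) (Or.inr (Or.inl rfl))] at h0
          have e2 : ((a : ℤ) - 1) = ((a - 1 : ℕ) : ℤ) := by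
            have : 1 ≤ a := by omega
            push_cast [this]
            ring
          rw [e2] at h0
          linarith
        · rw [if_neg ha, if_neg hb]
          have e2 : ((a : ℤ) - 1) = ((a - 1 : ℕ) : ℤ) := by
            have : 1 ≤ a := by omega
            push_cast [this]
            ring
          have e3 : ((b : ℤ) - 1) = ((b - 1 : ℕ) : ℤ) := by
            have : 1 ≤ b := by omega
            push_cast [this]
            ring
          rw [e2, e3] at h0
          linarith
    -- combine
    have hErec : E a b + (if a = 0 then 0 else E (a-1) b) + (if b = 0 then 0 else E a (b-1)) = 0 := by
      simp only [hE]
      split_ifs at hDr hdr ⊢ <;> linarith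
    by_cases ha : a = 0
    · subst ha
      by_cases hb : b = 0
      · exact absurd (by simp [hb]) hdvd
      · obtain ⟨y, rfl⟩ := Nat.exists_eq_succ_of_ne_zero hb
        rw [if_pos rfl, if_neg (Nat.succ_ne_zero y), zero_add]
        rw [if_pos rfl, if_neg (Nat.succ_ne_zero y)] at hErec
        rw [add_zero] at hErec
        simp only [Nat.succ_eq_add_one, Nat.add_sub_cancel] at hErec ⊢
        have hthis : E 0 (y+1) = - E 0 y := by linarith
        simp only [hf]
        rw [show 0 + (y+1) = (0+y)+1 by omega, pow_succ, hthis]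
        ring
    · by_cases hb : b = 0
      · obtain ⟨x, rfl⟩ := Nat.exists_eq_succ_of_ne_zero ha
        subst hb
        rw [if_neg (Nat.succ_ne_zero x), if_pos rfl, add_zero]
        rw [if_neg (Nat.succ_ne_zero x), if_pos rfl, add_zero] at hErec
        simp only [Nat.succ_eq_add_one, Nat.add_sub_cancel] at hErec ⊢
        have hthis : E (x+1) 0 = - E x 0 := by linarith
        simp only [hf]
        rw [show (x+1) + 0 = (x+0)+1 by omega, pow_succ, hthis]
        ring
      · obtain ⟨x, rfl⟩ := Nat.exists_eq_succ_of_ne_zero ha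
        obtain ⟨y, rfl⟩ := Nat.exists_eq_succ_of_ne_zero hb
        rw [if_neg (Nat.succ_ne_zero x), if_neg (Nat.succ_ne_zero y)]
        rw [if_neg (Nat.succ_ne_zero x), if_neg (Nat.succ_ne_zero y)] at hErec
        simp only [Nat.succ_eq_add_one, Nat.add_sub_cancel] at hErec ⊢
        have hthis : E (x+1) (y+1) = - E x (y+1) - E (x+1) y := by linarith
        simp only [hf]
        rw [show (x+1) + (y+1) = (x+(y+1))+1 by omega, pow_succ, hthis,
          show (x+1) + y = x+(y+1) by omega]
        ring
  have hzero := uniq p hp c hc1 f hf0 htop hfrec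
  intro n1 n2 hn
  have hfz := hzero n1 n2 hn
  simp only [hf, hE] at hfz
  have hpow : ((-1 : ℤ))^(n1+n2) ≠ 0 := pow_ne_zero _ (by norm_num)
  have := mul_eq_zero.mp hfz
  rcases this with h | h
  · exact absurd h hpow
  · linarith
end

section
/- Let p be an odd prime and ζ_p = exp(2πi/p). Then Π_{j=1}^{p−1} (1 + ζ_p^j − ζ_p^{2j}) = L_p, the p-th Lucas number. -/
/-!
With `φ, ψ` the roots of `X² - X - 1`, every factor splits as `1 + z - z² = -(φ - z)(ψ - z)`,
and `∏_{k=1}^{n-1} (x - ζ^k) = 1 + x + ⋯ + x^{n-1}` for a primitive `n`-th root of unity `ζ`.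
For odd `n` the signs cancel and the product becomes
`(φⁿ - 1)(ψⁿ - 1) / ((φ - 1)(ψ - 1)) = φⁿ + ψⁿ = Lₙ`, using `φψ = -1` twice.
-/

open Finset

/-- The Lucas numbers: `L 0 = 2`, `L 1 = 1`, `L (n+2) = L n + L (n+1)`. -/
def lucas : ℕ → ℕ
  | 0 => 2
  | 1 => 1
  | n + 2 => lucas n + lucas (n + 1)

section LucasBinet

variable {R : Type*} [CommRing R] {φ ψ : R}

theorem lucas_eq_pow_add_pow (hsum : φ + ψ = 1) (hprod : φ * ψ = -1) (n : ℕ) :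
    (lucas n : R) = φ ^ n + ψ ^ n := by
  induction n using Nat.twoStepInduction with
  | zero => norm_num [lucas]
  | one => simp [lucas, hsum]
  | more n ih₀ ih₁ =>
    rw [lucas, Nat.cast_add, ih₀, ih₁]
    linear_combination (φ ^ n + ψ ^ n) * hprod - (φ ^ n * φ + ψ ^ n * ψ) * hsum

theorem geom_sum_mul_geom_sum_eq_lucas (hsum : φ + ψ = 1) (hprod : φ * ψ = -1) {n : ℕ}
    (hn : Odd n) :
    (∑ i ∈ range n, φ ^ i) * (∑ i ∈ range n, ψ ^ i) = lucas n := by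
  have hunit : (φ - 1) * (ψ - 1) = -1 := by linear_combination hprod - hsum
  have hpow : φ ^ n * ψ ^ n = -1 := by rw [← mul_pow, hprod, hn.neg_one_pow]
  rw [lucas_eq_pow_add_pow hsum hprod]
  calc (∑ i ∈ range n, φ ^ i) * (∑ i ∈ range n, ψ ^ i)
      = -(((∑ i ∈ range n, φ ^ i) * (φ - 1)) * ((∑ i ∈ range n, ψ ^ i) * (ψ - 1))) := by
        linear_combination ((∑ i ∈ range n, φ ^ i) * (∑ i ∈ range n, ψ ^ i)) * hunit
    _ = -((φ ^ n - 1) * (ψ ^ n - 1)) := by rw [geom_sum_mul, geom_sum_mul]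
    _ = φ ^ n + ψ ^ n := by linear_combination -hpow

end LucasBinet

namespace IsPrimitiveRoot

open Polynomial

variable {R : Type*} [CommRing R] [IsDomain R] {n : ℕ} {ζ : R}

theorem prod_Ico_sub_pow (hn : 0 < n) (hζ : IsPrimitiveRoot ζ n) (x : R) :
    ∏ k ∈ Ico 1 n, (x - ζ ^ k) = ∑ i ∈ range n, x ^ i := by
  have h := X_pow_sub_C_eq_prod hζ hn (one_pow n)
  rw [← prod_range_mul_prod_Ico _ hn, prod_range_one, pow_zero, one_mul, C_1,
    ← mul_geom_sum] at h
  simpa [eval_geom_sum, eval_prod] using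
    (congrArg (eval x) (mul_left_cancel₀ (X_sub_C_ne_zero 1) h)).symm

theorem prod_Icc_one_add_pow_sub_pow_two_mul_eq_lucas (hn : Odd n) (hζ : IsPrimitiveRoot ζ n)
    {φ ψ : R} (hsum : φ + ψ = 1) (hprod : φ * ψ = -1) :
    ∏ j ∈ Icc 1 (n - 1), (1 + ζ ^ j - ζ ^ (2 * j)) = lucas n := by
  have hcard : Even #(Ico 1 n) := by
    rw [Nat.card_Ico]
    exact Nat.Odd.sub_odd hn odd_one
  have hfactor (z : R) : 1 + z - z ^ 2 = -((φ - z) * (ψ - z)) := by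
    linear_combination hprod - z * hsum
  rw [Icc_sub_one_right_eq_Ico_of_not_isMin (by simpa using hn.pos.ne') 1,
    ← geom_sum_mul_geom_sum_eq_lucas hsum hprod hn, ← hζ.prod_Ico_sub_pow hn.pos,
    ← hζ.prod_Ico_sub_pow hn.pos, ← prod_mul_distrib]
  simp_rw [pow_mul', hfactor, prod_neg, hcard.neg_one_pow, one_mul]

end IsPrimitiveRoot

theorem rarefaction_stmt15_general (p : ℕ) (hodd : Odd p)
    (ζ : ℂ) (hζ : ζ = Complex.exp (2 * Real.pi * Complex.I / p)) :
    ∏ j ∈ Finset.Icc 1 (p - 1), (1 + ζ ^ j - ζ ^ (2 * j)) = (lucas p : ℂ) := by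
  subst hζ
  exact (Complex.isPrimitiveRoot_exp p hodd.pos.ne').prod_Icc_one_add_pow_sub_pow_two_mul_eq_lucas
    hodd (φ := Real.goldenRatio) (ψ := Real.goldenConj)
    (mod_cast Real.goldenRatio_add_goldenConj) (mod_cast Real.goldenRatio_mul_goldenConj)

/-- `∏_{j=1}^{p-1} (1 + ζ_p^j - ζ_p^{2j}) = L_p`, the `p`-th Lucas
number. -/
theorem rarefaction_stmt15 (p : ℕ) (hp : p.Prime) (hodd : Odd p)
    (ζ : ℂ) (hζ : ζ = Complex.exp (2 * Real.pi * Complex.I / p)) :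
    ∏ j ∈ Finset.Icc 1 (p - 1), (1 + ζ ^ j - ζ ^ (2 * j)) = (lucas p : ℂ) :=
  rarefaction_stmt15_general p hodd ζ hζ
end

section
/- Let p ≥ 5 be a prime, ζ_p = exp(2πi/p), and δ ∈ {0,…,p−2}. Then the elementary symmetric polynomial of degree p−1−δ of the p−1 complex numbers (1 + ζ_p^j − ζ_p^{2j}), j = 1,…,p−1, equals C(p−1, δ) + Σ_{k=1}^{(p−1)/2} C(k−1, δ)·(C(p−k, k) + C(p−k−1, k−1)). In particular, this symmetric polynomial is a positive integer and is congruent to C(p−1, δ) modulo p. -/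
/-!
Put `u = t + 1` and let `α, β` be the roots of `x² - x - u`, so that
`t + (1 + z - z²) = -(α - z)(β - z)`. As `∏_{j=1}^{p-1} (x - ζ^j) = (x^p - 1)/(x - 1)` and
`(α - 1)(β - 1) = -u`, the polynomial `∏_j (t + 1 + ζ^j - ζ^{2j})` equals
`((αβ)^p - α^p - β^p + 1)/(-u) = (u^p + α^p + β^p - 1)/u` for odd `p`. The Lucas expansion
`α^p + β^p = 1 + ∑_{k ≥ 1} (p/(p-k)) C(p-k, k) u^k` makes this a polynomial in `u = t + 1`, and by
Vieta its coefficients in `t` are the elementary symmetric functions. Since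
`(p - k) · (p/(p-k)) C(p-k, k) = p C(p-k, k)`, the prime `p` divides every Lucas coefficient with
`0 < k < p`, which gives the congruence.
-/

open Finset Polynomial

theorem sum_Icc_one_eq_sum_range {M : Type*} [AddCommMonoid M] (f : ℕ → M) (n : ℕ) :
    ∑ k ∈ Icc 1 n, f k = ∑ k ∈ range n, f (k + 1) := by
  rw [← Ico_add_one_right_eq_Icc, sum_Ico_eq_sum_range, Nat.add_sub_cancel]
  simp only [add_comm]

-- `n/(n-k) · C(n-k, k)`, the coefficient of `u^k` in `α^n + β^n` when `α + β = 1`, `αβ = -u`.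
-- Only `k ≥ 1` is meant: truncated subtraction gives `lucasCoeff n 0 = 2`.
def lucasCoeff (n k : ℕ) : ℕ := (n - k).choose k + (n - k - 1).choose (k - 1)

section Lucas

variable {R : Type*} [CommRing R]

-- The Fibonacci polynomial: `fibSum n 1 = Nat.fib (n + 1)` (`Nat.fib_succ_eq_sum_choose`).
def fibSum (n : ℕ) (u : R) : R :=
  ∑ x ∈ antidiagonal n, (x.2.choose x.1 : R) * u ^ x.1

theorem fibSum_eq_sum_range (n : ℕ) (u : R) :
    fibSum n u = ∑ k ∈ range (n + 1), ((n - k).choose k : R) * u ^ k :=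
  Nat.sum_antidiagonal_eq_sum_range_succ (fun i j => (j.choose i : R) * u ^ i) n

theorem fibSum_add_two (n : ℕ) (u : R) :
    fibSum (n + 2) u = fibSum (n + 1) u + u * fibSum n u := by
  simp only [fibSum, Nat.antidiagonal_succ_succ', Nat.antidiagonal_succ, sum_cons, sum_map]
  rw [add_assoc, mul_sum, ← sum_add_distrib]
  simp only [Nat.choose_zero_right, Nat.cast_one, pow_zero, mul_one, Nat.choose_zero_succ,
    Nat.cast_zero, zero_mul, Function.Embedding.coe_prodMap, Function.Embedding.coeFn_mk,
    Prod.map_snd, Prod.map_fst, Nat.succ_eq_add_one, Nat.choose_succ_succ, Nat.cast_add, zero_add,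
    Function.Embedding.refl_apply, add_right_inj]
  refine sum_congr rfl fun x _ => by ring

theorem fibSum_zero (u : R) : fibSum 0 u = 1 := by
  simp [fibSum]

theorem fibSum_one (u : R) : fibSum 1 u = 1 := by
  simp [fibSum_eq_sum_range, sum_range_succ]

theorem pow_add_pow_eq_fibSum {α β u : R} (hadd : α + β = 1) (hmul : α * β = -u) (n : ℕ) :
    α ^ (n + 2) + β ^ (n + 2) = fibSum (n + 2) u + u * fibSum n u := by
  induction n using Nat.twoStepInduction with
  | zero =>
    linear_combination (α + β + 1) * hadd - 2 * hmul - fibSum_add_two 0 u - 2 * u * fibSum_zero u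
      - fibSum_one u
  | one =>
    linear_combination (α ^ 2 + β ^ 2 + 1 - α * β + (α + β)) * hadd - 3 * hmul
      - fibSum_add_two 1 u - fibSum_add_two 0 u - u * fibSum_zero u - (1 + 2 * u) * fibSum_one u
  | more n ih₀ ih₁ =>
    linear_combination ih₁ + u * ih₀ + (α ^ (n + 3) + β ^ (n + 3)) * hadd
      - (α ^ (n + 2) + β ^ (n + 2)) * hmul - fibSum_add_two (n + 2) u - u * fibSum_add_two n u

theorem fibSum_add_mul_fibSum (n : ℕ) (u : R) :
    fibSum (n + 2) u + u * fibSum n u =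
      1 + ∑ k ∈ Icc 1 (n + 2), (lucasCoeff (n + 2) k : R) * u ^ k := by
  have hshift : u * fibSum n u = ∑ k ∈ range (n + 2), ((n - k).choose k : R) * u ^ (k + 1) := by
    rw [fibSum_eq_sum_range, mul_sum, sum_range_succ _ (n + 1), Nat.sub_eq_zero_of_le n.le_succ,
      Nat.choose_zero_succ, Nat.cast_zero, zero_mul, add_zero]
    exact sum_congr rfl fun k _ => by ring
  have hcoeff (k : ℕ) :
      lucasCoeff (n + 2) (k + 1) = (n + 1 - k).choose (k + 1) + (n - k).choose k := by
    simp only [lucasCoeff]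
    congr 2 <;> omega
  rw [fibSum_eq_sum_range, sum_range_succ', hshift, sum_Icc_one_eq_sum_range]
  simp only [hcoeff, Nat.cast_add, add_mul, sum_add_distrib, Nat.sub_zero, Nat.choose_zero_right,
    Nat.cast_one, pow_zero, mul_one, show ∀ k, n + 2 - (k + 1) = n + 1 - k by omega]
  ring

theorem lucasCoeff_eq_zero {n k : ℕ} (hn : 2 ≤ n) (hk : n < 2 * k) : lucasCoeff n k = 0 := by
  rw [lucasCoeff, Nat.choose_eq_zero_of_lt (by omega), Nat.choose_eq_zero_of_lt (by omega)]

theorem pow_add_pow_eq_one_add_sum_lucasCoeff {α β u : R} (hadd : α + β = 1) (hmul : α * β = -u)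
    {n : ℕ} (hn : 2 ≤ n) :
    α ^ n + β ^ n = 1 + ∑ k ∈ Icc 1 (n / 2), (lucasCoeff n k : R) * u ^ k := by
  obtain ⟨m, rfl⟩ := Nat.exists_eq_add_of_le' hn
  rw [pow_add_pow_eq_fibSum hadd hmul, fibSum_add_mul_fibSum,
    sum_subset (Icc_subset_Icc_right (Nat.div_le_self _ 2))]
  intro k hk hk'
  simp only [mem_Icc, not_and, not_le] at hk hk'
  rw [lucasCoeff_eq_zero hn (by omega), Nat.cast_zero, zero_mul]

end Lucas

theorem sub_mul_lucasCoeff {n k : ℕ} (hk : 1 ≤ k) :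
    (n - k) * lucasCoeff n k = n * (n - k).choose k := by
  obtain ⟨j, rfl⟩ := Nat.exists_eq_add_of_le' hk
  rcases le_or_gt n (j + 1) with h | h
  · simp [Nat.sub_eq_zero_of_le h]
  obtain ⟨m, rfl⟩ : ∃ m, n = m + j + 2 := ⟨n - (j + 2), by omega⟩
  rw [lucasCoeff, show m + j + 2 - (j + 1) = m + 1 by omega, Nat.add_sub_cancel,
    Nat.add_sub_cancel, mul_add, Nat.add_one_mul_choose_eq]
  ring

theorem Nat.Prime.dvd_lucasCoeff {p k : ℕ} (hp : p.Prime) (hk : 1 ≤ k) (hkp : k < p) :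
    p ∣ lucasCoeff p k := by
  have h : p ∣ (p - k) * lucasCoeff p k := sub_mul_lucasCoeff hk ▸ dvd_mul_right _ _
  exact (hp.dvd_mul.mp h).resolve_left (Nat.not_dvd_of_pos_of_lt (by omega) (by omega))

theorem IsPrimitiveRoot.sub_one_mul_prod_sub_pow {R : Type*} [CommRing R] [IsDomain R] {ζ : R}
    {n : ℕ} (hζ : IsPrimitiveRoot ζ n) (hn : 0 < n) (x : R) :
    (x - 1) * ∏ j ∈ Icc 1 (n - 1), (x - ζ ^ j) = x ^ n - 1 := by
  have h := congrArg (eval x) (X_pow_sub_C_eq_prod hζ hn (one_pow n))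
  simp only [eval_sub, eval_pow, eval_X, eval_C, eval_prod, mul_one] at h
  obtain ⟨m, rfl⟩ := Nat.exists_eq_add_of_le' hn
  rw [h, prod_range_succ', ← Ico_add_one_right_eq_Icc, prod_Ico_eq_prod_range, Nat.add_sub_cancel,
    Nat.add_sub_cancel, pow_zero, mul_comm]
  simp only [add_comm]

theorem add_one_mul_prod_add_eq {R : Type*} [CommRing R] [IsDomain R] {ζ α β t : R} {n : ℕ}
    (hζ : IsPrimitiveRoot ζ n) (hn : Odd n) (hadd : α + β = 1) (hmul : α * β = -(t + 1)) :
    (t + 1) * ∏ j ∈ Icc 1 (n - 1), (t + (1 + ζ ^ j - ζ ^ (2 * j))) =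
      (t + 1) ^ n + α ^ n + β ^ n - 1 := by
  set A := ∏ j ∈ Icc 1 (n - 1), (α - ζ ^ j)
  set B := ∏ j ∈ Icc 1 (n - 1), (β - ζ ^ j)
  have hfac : ∏ j ∈ Icc 1 (n - 1), (t + (1 + ζ ^ j - ζ ^ (2 * j))) = A * B := by
    calc _ = ∏ j ∈ Icc 1 (n - 1), -((α - ζ ^ j) * (β - ζ ^ j)) :=
          prod_congr rfl fun j _ => by linear_combination (pow_mul' ζ j 2) - ζ ^ j * hadd + hmul
      _ = A * B := by
        rw [prod_neg, Nat.card_Icc, Nat.add_sub_cancel, (Nat.Odd.sub_odd hn odd_one).neg_one_pow,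
          one_mul, prod_mul_distrib]
  have hα : (α - 1) * A = α ^ n - 1 := hζ.sub_one_mul_prod_sub_pow hn.pos α
  have hβ : (β - 1) * B = β ^ n - 1 := hζ.sub_one_mul_prod_sub_pow hn.pos β
  have hpow : (α * β) ^ n = -(t + 1) ^ n := by rw [hmul, hn.neg_pow]
  rw [hfac]
  linear_combination -((β - 1) * B) * hα - (α ^ n - 1) * hβ + A * B * (hmul - hadd) - hpow

theorem prod_X_add_C_eq_lucas {K : Type*} [Field K] [IsAlgClosed K] {ζ : K} {p : ℕ}
    (hζ : IsPrimitiveRoot ζ p) (hp : Odd p) (hp1 : 1 < p) :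
    ∏ j ∈ Icc 1 (p - 1), (X + C (1 + ζ ^ j - ζ ^ (2 * j))) =
      (X + 1) ^ (p - 1) +
        ∑ k ∈ Icc 1 ((p - 1) / 2), C (lucasCoeff p k : K) * (X + 1) ^ (k - 1) := by
  refine mul_left_cancel₀ (X_add_C_ne_zero (1 : K)) (Polynomial.funext fun t => ?_)
  have hdeg : (X ^ 2 - X - C (t + 1)).degree = 2 := by compute_degree!
  obtain ⟨α, hα⟩ := IsAlgClosed.exists_root (X ^ 2 - X - C (t + 1)) (by rw [hdeg]; decide)
  have hmul : α * (1 - α) = -(t + 1) := by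
    simp only [IsRoot, eval_sub, eval_pow, eval_X, eval_C] at hα
    linear_combination -hα
  have hsum : ∑ k ∈ Icc 1 ((p - 1) / 2), (lucasCoeff p k : K) * (t + 1) ^ k =
      (t + 1) * ∑ k ∈ Icc 1 ((p - 1) / 2), (lucasCoeff p k : K) * (t + 1) ^ (k - 1) := by
    rw [mul_sum]
    refine sum_congr rfl fun k hk => ?_
    obtain ⟨j, rfl⟩ := Nat.exists_eq_add_of_le' (mem_Icc.mp hk).1
    rw [Nat.add_sub_cancel]
    ring
  have hpow : (t + 1) ^ p = (t + 1) * (t + 1) ^ (p - 1) := by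
    rw [← pow_succ', Nat.sub_add_cancel hp1.le]
  have hlucas := pow_add_pow_eq_one_add_sum_lucasCoeff (add_sub_cancel α 1) hmul hp1
  rw [show p / 2 = (p - 1) / 2 by obtain ⟨r, rfl⟩ := hp; omega] at hlucas
  simp only [C_1, eval_mul, eval_add, eval_X, eval_one, eval_prod, eval_C, eval_pow,
    eval_finsetSum]
  linear_combination add_one_mul_prod_add_eq hζ hp (add_sub_cancel α 1) hmul + hlucas + hpow + hsum

theorem sum_powersetCard_prod_eq {K : Type*} [Field K] [IsAlgClosed K] {ζ : K} {p δ : ℕ}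
    (hζ : IsPrimitiveRoot ζ p) (hp : Odd p) (hp1 : 1 < p) (hδ : δ ≤ p - 1) :
    ∑ S ∈ (Icc 1 (p - 1)).powersetCard (p - 1 - δ), ∏ j ∈ S, (1 + ζ ^ j - ζ ^ (2 * j)) =
      (((p - 1).choose δ +
        ∑ k ∈ Icc 1 ((p - 1) / 2), (k - 1).choose δ * lucasCoeff p k : ℕ) : K) := by
  have h := congrArg (coeff · δ) (prod_X_add_C_eq_lucas hζ hp hp1)
  rw [prod_X_add_C_coeff _ _ (by simpa using hδ), Nat.card_Icc, Nat.add_sub_cancel] at h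
  rw [h]
  simp [coeff_X_add_one_pow, finsetSum_coeff, mul_comm]

/-- For a prime `p ≥ 5` and `δ ∈ {0,…,p-2}`, the elementary symmetric
polynomial of degree `p-1-δ` of the numbers `1 + ζ_p^j - ζ_p^{2j}`, `j = 1,…,p-1`, equals
`C(p-1,δ) + ∑_{k=1}^{(p-1)/2} C(k-1,δ)(C(p-k,k) + C(p-k-1,k-1))`; in particular it is a
positive integer congruent to `C(p-1,δ)` modulo `p`. -/
theorem rarefaction_stmt19 (p : ℕ) (hp : p.Prime) (hp5 : 5 ≤ p)
    (δ : ℕ) (hδ : δ ≤ p - 2)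
    (ζ : ℂ) (hζ : ζ = Complex.exp (2 * Real.pi * Complex.I / p)) :
    ∑ S ∈ (Finset.Icc 1 (p - 1)).powersetCard (p - 1 - δ),
        ∏ j ∈ S, (1 + ζ ^ j - ζ ^ (2 * j)) =
      (((p - 1).choose δ + ∑ k ∈ Finset.Icc 1 ((p - 1) / 2),
        (k - 1).choose δ * ((p - k).choose k + (p - k - 1).choose (k - 1)) : ℕ) : ℂ) ∧
    0 < (p - 1).choose δ + ∑ k ∈ Finset.Icc 1 ((p - 1) / 2),
        (k - 1).choose δ * ((p - k).choose k + (p - k - 1).choose (k - 1)) ∧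
    ((p - 1).choose δ + ∑ k ∈ Finset.Icc 1 ((p - 1) / 2),
        (k - 1).choose δ * ((p - k).choose k + (p - k - 1).choose (k - 1)) ≡
      (p - 1).choose δ [MOD p]) := by
  have hζp : IsPrimitiveRoot ζ p := hζ ▸ Complex.isPrimitiveRoot_exp p hp.ne_zero
  have hodd : Odd p := hp.odd_of_ne_two (by omega)
  have hdvd : p ∣ ∑ k ∈ Icc 1 ((p - 1) / 2), (k - 1).choose δ * lucasCoeff p k :=
    dvd_sum fun k hk => by
      have hk := mem_Icc.mp hk
      exact (hp.dvd_lucasCoeff hk.1 (by omega)).mul_left _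
  refine ⟨sum_powersetCard_prod_eq hζp hodd hp.one_lt (by omega),
    Nat.add_pos_left (Nat.choose_pos (by omega)) _, ?_⟩
  have h := (Nat.modEq_zero_iff_dvd.mpr hdvd).add_left ((p - 1).choose δ)
  rwa [add_zero] at h
end
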